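/- arXiv:1010.3570 — 9 statements merged into one kernel-verified Lean document; each statement's English description precedes it below -/
import Mathlib

section
/- The average entropy of the arcsine distribution equals ln 2 − 1; that is, ∫₀² (−x ln x) · 1/(π√(x(2-x))) dx = ln 2 − 1. -/
/-!
Under `x = 1 - cos θ` the arcsine law on `(0, 2)` is the image of the uniform law on `(0, π)`,
so the integral equals `-(1/π) ∫₀^π (1 - cos θ) log (1 - cos θ) dθ`. With `θ = 2φ` and
`1 - cos 2φ = 2 sin² φ`, this reduces to `∫₀^{π/2} sin² φ = π/4`, the classical
`∫₀^{π/2} log sin φ = -(π/2) log 2`, and `∫₀^{π/2} cos 2φ log sin φ = -π/4`, which follows by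
parts from `cos 2φ = (sin φ cos φ)'`.
-/

open Real MeasureTheory Set

noncomputable def arcsineDensity (x : ℝ) : ℝ := 1 / (π * √(x * (2 - x)))

theorem image_one_sub_cos_Ioo_zero_pi : (fun θ => 1 - cos θ) '' Ioo 0 π = Ioo 0 2 := by
  have hmono : StrictMonoOn (fun θ => 1 - cos θ) (Icc 0 π) :=
    fun a ha b hb hab => sub_lt_sub_left (strictAntiOn_cos ha hb hab) 1
  rw [(continuous_const.sub continuous_cos).continuousOn.image_Ioo_of_strictMonoOn
    (f := fun θ => 1 - cos θ) pi_pos.le hmono]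
  norm_num

theorem setIntegral_mul_arcsineDensity (f : ℝ → ℝ) :
    ∫ x in Ioo 0 2, f x * arcsineDensity x = (∫ θ in 0..π, f (1 - cos θ)) / π := by
  have hderiv : ∀ θ ∈ Ioo 0 π, HasDerivWithinAt (fun θ => 1 - cos θ) (sin θ) (Ioo 0 π) θ :=
    fun θ _ => by simpa using ((hasDerivAt_cos θ).const_sub 1).hasDerivWithinAt
  have hinj : InjOn (fun θ => 1 - cos θ) (Ioo 0 π) := fun a ha b hb h =>
    injOn_cos (Ioo_subset_Icc_self ha) (Ioo_subset_Icc_self hb) (sub_right_injective h)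
  rw [← image_one_sub_cos_Ioo_zero_pi,
    integral_image_eq_integral_abs_deriv_smul measurableSet_Ioo hderiv hinj,
    intervalIntegral.integral_of_le pi_pos.le, integral_Ioc_eq_integral_Ioo, ← integral_div]
  refine setIntegral_congr_fun measurableSet_Ioo fun θ hθ => ?_
  have hsin : 0 < sin θ := sin_pos_of_pos_of_lt_pi hθ.1 hθ.2
  have hsq : (1 - cos θ) * (2 - (1 - cos θ)) = sin θ ^ 2 := by
    linear_combination (sin_sq_add_cos_sq θ).symm
  simp only [arcsineDensity, smul_eq_mul, hsq, sqrt_sq hsin.le, abs_of_pos hsin]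
  field_simp

theorem integral_cos_two_mul_mul_log_sin :
    ∫ φ in 0..π / 2, cos (2 * φ) * log (sin φ) = -(π / 4) := by
  have hderiv : ∀ φ ∈ Ioo 0 (π / 2),
      HasDerivAt (fun φ => cos φ * (sin φ * log (sin φ)) - (φ + sin φ * cos φ) / 2)
        (cos (2 * φ) * log (sin φ)) φ := by
    intro φ hφ
    have hsin : sin φ ≠ 0 := (sin_pos_of_pos_of_lt_pi hφ.1 (by linarith [hφ.2, pi_pos])).ne'
    refine (((hasDerivAt_cos φ).mul ((hasDerivAt_sin φ).mul ((hasDerivAt_sin φ).log hsin))).sub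
      (((hasDerivAt_id φ).add ((hasDerivAt_sin φ).mul (hasDerivAt_cos φ))).div_const 2)
      ).congr_deriv ?_
    simp only [Pi.mul_apply, cos_two_mul']
    field_simp
    linear_combination sin_sq_add_cos_sq φ
  have hcont : Continuous fun φ => cos φ * (sin φ * log (sin φ)) - (φ + sin φ * cos φ) / 2 :=
    (continuous_cos.mul (continuous_mul_log.comp continuous_sin)).sub (by fun_prop)
  rw [intervalIntegral.integral_eq_sub_of_hasDerivAt_of_le (by positivity) hcont.continuousOn
    hderiv (intervalIntegrable_log_sin.continuousOn_mul (by fun_prop))]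
  simp only [cos_pi_div_two, sin_pi_div_two, log_one, mul_zero, add_zero, zero_sub, cos_zero,
    sin_zero, log_zero, mul_one, zero_div, sub_self, sub_zero, neg_inj]
  ring

-- Valid also where `sin φ = 0`, since both sides vanish there (`log 0 = 0`).
theorem one_sub_cos_two_mul_mul_log (φ : ℝ) :
    (1 - cos (2 * φ)) * log (1 - cos (2 * φ)) =
      2 * log 2 * sin φ ^ 2 + 2 * log (sin φ) - 2 * (cos (2 * φ) * log (sin φ)) := by
  have h : 1 - cos (2 * φ) = 2 * sin φ ^ 2 := by
    rw [cos_two_mul, cos_sq']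
    ring
  rw [h]
  rcases eq_or_ne (sin φ) 0 with hs | hs
  · simp [hs]
  · rw [log_mul two_ne_zero (pow_ne_zero 2 hs), log_pow, cos_two_mul, cos_sq']
    push_cast
    ring

theorem integral_one_sub_cos_mul_log_one_sub_cos :
    ∫ θ in 0..π, (1 - cos θ) * log (1 - cos θ) = π * (1 - log 2) := by
  have hsq : IntervalIntegrable (fun φ => 2 * log 2 * sin φ ^ 2) volume 0 (π / 2) :=
    (by fun_prop : Continuous fun φ => 2 * log 2 * sin φ ^ 2).intervalIntegrable _ _
  have hlog : IntervalIntegrable (fun φ => 2 * log (sin φ)) volume 0 (π / 2) :=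
    intervalIntegrable_log_sin.const_mul 2
  have hcos : IntervalIntegrable (fun φ => 2 * (cos (2 * φ) * log (sin φ))) volume 0 (π / 2) :=
    (intervalIntegrable_log_sin.continuousOn_mul (by fun_prop)).const_mul 2
  calc ∫ θ in 0..π, (1 - cos θ) * log (1 - cos θ)
      = 2 * ∫ φ in 0..π / 2, (1 - cos (2 * φ)) * log (1 - cos (2 * φ)) := by
        rw [intervalIntegral.integral_comp_mul_left (fun θ => (1 - cos θ) * log (1 - cos θ))
          two_ne_zero]
        field_simp
        simp
    _ = 2 * ((∫ φ in 0..π / 2, 2 * log 2 * sin φ ^ 2) + (∫ φ in 0..π / 2, 2 * log (sin φ))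
          - ∫ φ in 0..π / 2, 2 * (cos (2 * φ) * log (sin φ))) := by
        simp_rw [one_sub_cos_two_mul_mul_log]
        rw [intervalIntegral.integral_sub (hsq.add hlog) hcos,
          intervalIntegral.integral_add hsq hlog]
    _ = π * (1 - log 2) := by
        simp only [intervalIntegral.integral_const_mul, integral_sin_sq,
          integral_log_sin_zero_pi_div_two, integral_cos_two_mul_mul_log_sin, sin_zero, cos_zero,
          sin_pi_div_two, cos_pi_div_two, mul_zero, sub_zero]
        ring

/-- The average entropy of the arcsine distribution equals `ln 2 - 1`. -/
theorem arcsine_mean_entropy :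
    ∫ x in Set.Ioo (0:ℝ) 2,
      (-x * Real.log x) * (1 / (π * Real.sqrt (x * (2 - x)))) = Real.log 2 - 1 := by
  change ∫ x in Ioo (0:ℝ) 2, (-x * log x) * arcsineDensity x = log 2 - 1
  rw [setIntegral_mul_arcsineDensity]
  simp only [neg_mul, intervalIntegral.integral_neg, integral_one_sub_cos_mul_log_one_sub_cos]
  field_simp
  ring
end

section
/- For each integer k ≥ 2, the function ν_k(x) = (1/(2π)) · √(4k(k−1)x − k²x²) / (kx − x²) defined on (0, 4(k−1)/k) is a probability density, i.e., its integral over (0, 4(k−1)/k) equals 1. -/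
/-!
Write `b = 4(K-1)/K`, so that `K b = 4(K-1)` and `K - b = (K-2)²/K ≥ 0`. On `(0, b)` the density
equals `K √(x(b-x)) / (2π x (K-x))`, and it is the derivative of
`(K arcsin √(x/b) - (K-2) arcsin √((K-2)² x / (4(K-1)(K-x)))) / π`.
The second arcsin is the textbook `arctan ((K-2)/K · √(x/(b-x)))`, rewritten so that it stays
continuous at `x = b`. So the primitive is continuous on `[0, b]` and goes from `0` to
`(K π/2 - (K-2) π/2)/π = 1`; since the density is nonnegative, it is integrable and the
fundamental theorem of calculus applies.
-/

open Real MeasureTheory Set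

theorem integral_Ioo_eq_sub_of_hasDerivAt_of_nonneg {f f' : ℝ → ℝ} {a b : ℝ} (hab : a ≤ b)
    (hcont : ContinuousOn f (Icc a b)) (hderiv : ∀ x ∈ Ioo a b, HasDerivAt f (f' x) x)
    (hpos : ∀ x ∈ Ioo a b, 0 ≤ f' x) :
    ∫ x in Ioo a b, f' x = f b - f a := by
  rw [← integral_Ioc_eq_integral_Ioo, ← intervalIntegral.integral_of_le hab]
  exact intervalIntegral.integral_eq_sub_of_hasDerivAt_of_le hab hcont hderiv
    ((intervalIntegrable_iff_integrableOn_Ioc_of_le hab).2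
      (intervalIntegral.integrableOn_deriv_of_nonneg hcont hderiv hpos))

theorem HasDerivAt.arcsin_sqrt {u : ℝ → ℝ} {u' x : ℝ} (hu : HasDerivAt u u' x)
    (h0 : 0 < u x) (h1 : u x < 1) :
    HasDerivAt (fun y ↦ arcsin (√(u y))) (u' / (2 * √(u x * (1 - u x)))) x := by
  have hs : √(u x) < 1 := by rw [sqrt_lt' one_pos]; simpa
  have := (hasDerivAt_arcsin (by linarith [sqrt_nonneg (u x)]) hs.ne).comp x (hu.sqrt h0.ne')
  refine this.congr_deriv ?_
  rw [sq_sqrt h0.le, sqrt_mul h0.le]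
  field_simp

theorem hasDerivAt_arcsin_sqrt_div {b x : ℝ} (hx : 0 < x) (hxb : x < b) :
    HasDerivAt (fun y ↦ arcsin √(y / b)) (1 / (2 * √(x * (b - x)))) x := by
  have hb : 0 < b := hx.trans hxb
  have := ((hasDerivAt_id' x).div_const b).arcsin_sqrt (div_pos hx hb) ((div_lt_one hb).2 hxb)
  refine this.congr_deriv ?_
  have hsq : x / b * (1 - x / b) = (1 / b) ^ 2 * (x * (b - x)) := by field_simp
  rw [hsq, sqrt_mul (sq_nonneg _), sqrt_sq (by positivity)]
  field_simp

noncomputable def nuEdge (K : ℝ) : ℝ := 4 * (K - 1) / K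

noncomputable def nuDensity (K x : ℝ) : ℝ :=
  1 / (2 * π) * √(4 * K * (K - 1) * x - K ^ 2 * x ^ 2) / (K * x - x ^ 2)

noncomputable def nuPrimitive (K x : ℝ) : ℝ :=
  (K * arcsin √(x / nuEdge K) -
    (K - 2) * arcsin √((K - 2) ^ 2 * x / (4 * (K - 1) * (K - x)))) / π

section

variable {K x : ℝ}

theorem mul_nuEdge (hK : K ≠ 0) : K * nuEdge K = 4 * (K - 1) := by
  unfold nuEdge; field_simp

theorem sub_nuEdge (hK : K ≠ 0) : K - nuEdge K = (K - 2) ^ 2 / K := by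
  unfold nuEdge; field_simp; ring

theorem nuEdge_pos (hK : 1 < K) : 0 < nuEdge K := div_pos (by linarith) (by linarith)

theorem nuEdge_le (hK : 0 < K) : nuEdge K ≤ K := by
  have := sub_nuEdge hK.ne'
  have : 0 ≤ (K - 2) ^ 2 / K := by positivity
  linarith

theorem nuEdge_lt (hK : 2 < K) : nuEdge K < K := by
  have := sub_nuEdge (K := K) (by linarith)
  have : 0 < (K - 2) ^ 2 / K := div_pos (pow_pos (by linarith) 2) (by linarith)
  linarith

theorem nuDensity_eq (hK : 0 < K) :
    nuDensity K x = K * √(x * (nuEdge K - x)) / (2 * π * (x * (K - x))) := by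
  have hrad : 4 * K * (K - 1) * x - K ^ 2 * x ^ 2 = K ^ 2 * (x * (nuEdge K - x)) := by
    linear_combination (-(K * x)) * mul_nuEdge hK.ne'
  rw [nuDensity, hrad, sqrt_mul (sq_nonneg K), sqrt_sq hK.le]
  field_simp

theorem nuDensity_nonneg (hK : 0 < K) (hx : 0 < x) (hxK : x < K) : 0 ≤ nuDensity K x := by
  rw [nuDensity_eq hK]
  have : 0 < K - x := by linarith
  positivity

theorem hasDerivAt_nuPrimitive_secondTerm (hK : 2 ≤ K) (hx : 0 < x) (hxb : x < nuEdge K) :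
    HasDerivAt (fun y ↦ (K - 2) * arcsin √((K - 2) ^ 2 * y / (4 * (K - 1) * (K - y))))
      ((K - 2) ^ 2 / (2 * (K - x) * √(x * (nuEdge K - x)))) x := by
  rcases hK.eq_or_lt with rfl | hK
  · simpa using hasDerivAt_const x (0 : ℝ)
  have hK2 : 0 < K - 2 := by linarith
  have hK1 : 0 < K - 1 := by linarith
  have hKx : 0 < K - x := by linarith [nuEdge_lt hK]
  have hb := mul_nuEdge (K := K) (by linarith)
  have hu : HasDerivAt (fun y ↦ (K - 2) ^ 2 * y / (4 * (K - 1) * (K - y)))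
      ((K - 2) ^ 2 * K / (4 * (K - 1) * (K - x) ^ 2)) x := by
    refine (((hasDerivAt_id' x).const_mul _).fun_div
      (((hasDerivAt_id' x).const_sub K).const_mul (4 * (K - 1)))
      (by positivity)).congr_deriv ?_
    field_simp
    ring
  have h0 : 0 < (K - 2) ^ 2 * x / (4 * (K - 1) * (K - x)) := by positivity
  have h1 : (K - 2) ^ 2 * x / (4 * (K - 1) * (K - x)) < 1 := by
    rw [div_lt_one (by positivity)]
    nlinarith
  refine ((hu.arcsin_sqrt h0 h1).const_mul (K - 2)).congr_deriv ?_
  have hsq : (K - 2) ^ 2 * x / (4 * (K - 1) * (K - x)) *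
      (1 - (K - 2) ^ 2 * x / (4 * (K - 1) * (K - x))) =
      ((K - 2) * K / (4 * (K - 1) * (K - x))) ^ 2 * (x * (nuEdge K - x)) := by
    field_simp
    linear_combination (-K) * hb
  rw [hsq, sqrt_mul (sq_nonneg _), sqrt_sq (by positivity)]
  field_simp

theorem hasDerivAt_nuPrimitive (hK : 2 ≤ K) (hx : 0 < x) (hxb : x < nuEdge K) :
    HasDerivAt (nuPrimitive K) (nuDensity K x) x := by
  have hKx : 0 < K - x := by linarith [nuEdge_le (K := K) (by linarith)]
  have hs : √(x * (nuEdge K - x)) ^ 2 = x * (nuEdge K - x) := sq_sqrt (by nlinarith)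
  have hs0 : 0 < √(x * (nuEdge K - x)) := sqrt_pos.2 (by nlinarith)
  refine ((((hasDerivAt_arcsin_sqrt_div hx hxb).const_mul K).sub
    (hasDerivAt_nuPrimitive_secondTerm hK hx hxb)).div_const π).congr_deriv ?_
  rw [nuDensity_eq (by linarith)]
  field_simp
  linear_combination (-K) * hs - x * mul_nuEdge (K := K) (by linarith)

theorem continuousOn_nuPrimitive (hK : 2 ≤ K) :
    ContinuousOn (nuPrimitive K) (Icc 0 (nuEdge K)) := by
  unfold nuPrimitive
  rcases hK.eq_or_lt with rfl | hK
  · simp only [sub_self, zero_mul, sub_zero]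
    fun_prop
  have hKb := nuEdge_lt hK
  have hden : ∀ y ∈ Icc 0 (nuEdge K), 4 * (K - 1) * (K - y) ≠ 0 := fun y hy ↦
    mul_ne_zero (by linarith) (by linarith [hy.2])
  fun_prop (disch := assumption)

theorem nuPrimitive_zero : nuPrimitive K 0 = 0 := by
  simp [nuPrimitive]

theorem nuPrimitive_nuEdge (hK : 2 ≤ K) : nuPrimitive K (nuEdge K) = 1 := by
  unfold nuPrimitive
  rcases hK.eq_or_lt with rfl | hK
  · norm_num [nuEdge]
    field_simp
  have hu : (K - 2) ^ 2 * nuEdge K / (4 * (K - 1) * (K - nuEdge K)) = 1 := by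
    have hK1 : K - 1 ≠ 0 := by linarith
    rw [sub_nuEdge (by linarith), nuEdge]
    field_simp
  rw [hu, div_self (nuEdge_pos (by linarith)).ne', sqrt_one, arcsin_one]
  field_simp
  ring

theorem integral_nuDensity (hK : 2 ≤ K) : ∫ x in Ioo 0 (nuEdge K), nuDensity K x = 1 := by
  have hb := nuEdge_le (K := K) (by linarith)
  rw [integral_Ioo_eq_sub_of_hasDerivAt_of_nonneg (nuEdge_pos (by linarith)).le
      (continuousOn_nuPrimitive hK) (fun x hx ↦ hasDerivAt_nuPrimitive hK hx.1 hx.2)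
      (fun x hx ↦ nuDensity_nonneg (by linarith) hx.1 (by linarith [hx.2])),
    nuPrimitive_nuEdge hK, nuPrimitive_zero, sub_zero]

end

/-- For `k ≥ 2`, the density `ν_k` integrates to 1 over `(0, 4(k-1)/k)`. -/
theorem nu_k_integrates_to_one (k : ℕ) (hk : 2 ≤ k) :
    ∫ x in Set.Ioo (0:ℝ) (4 * ((k:ℝ) - 1) / k),
      (1 / (2 * π)) * Real.sqrt (4 * k * ((k:ℝ) - 1) * x - (k:ℝ) ^ 2 * x ^ 2)
        / ((k:ℝ) * x - x ^ 2) = 1 :=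
  integral_nuDensity (by exact_mod_cast hk)
end

section
/- For each integer k ≥ 2, the second moment of the density ν_k(x) = (1/(2π))·√(4k(k−1)x − k²x²)/(kx − x²) on (0, 4(k−1)/k) equals 2 − 1/k. -/
open Real MeasureTheory

/-!
With `K = k` and `b = 4(K-1)/K` the integrand is `(K/2π) · x √(x(b-x)) / (K-x)` on `(0, b)`.
Splitting `x/(K-x) = K/(K-x) - 1` reduces the moment to the half-disc area
`∫₀ᵇ √(x(b-x)) = πb²/8` and to `∫₀ᵇ √(x(b-x))/(K-x) = π(K - b/2 - √(K(K-b)))` for `0 < b ≤ K`,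
obtained from an explicit arcsin primitive. The latter integrand is nonnegative, so the
fundamental theorem of calculus also gives its integrability, although it blows up at `x = b`
when `b = K` (the case `k = 2`). For `b = 4(K-1)/K` one has `K(K-b) = (K-2)²`, and the moment
collapses to `2 - 1/K`.
-/

section
open Set intervalIntegral

variable {b K x : ℝ}

theorem integral_sqrt_mul_sub (hb : 0 ≤ b) :
    ∫ x in (0)..b, √(x * (b - x)) = π * b ^ 2 / 8 := by
  have key :=
    smul_integral_comp_mul_add (a := -1) (b := 1) (fun x => √(x * (b - x))) (b / 2) (b / 2)
  have hsq : ∀ t : ℝ,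
      √((b / 2 * t + b / 2) * (b - (b / 2 * t + b / 2))) = b / 2 * √(1 - t ^ 2) := by
    intro t
    rw [show (b / 2 * t + b / 2) * (b - (b / 2 * t + b / 2)) = (b / 2) ^ 2 * (1 - t ^ 2) by ring,
      sqrt_mul (by positivity), sqrt_sq (by positivity)]
  simp only [hsq, intervalIntegral.integral_const_mul, integral_sqrt_one_sub_sq, smul_eq_mul] at key
  rw [show b / 2 * -1 + b / 2 = 0 by ring, show b / 2 * 1 + b / 2 = b by ring] at key
  rw [← key]; ring

theorem hasDerivAt_sqrt_mul_sub (hx : x ∈ Ioo 0 b) :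
    HasDerivAt (fun y => √(y * (b - y))) ((b - 2 * x) / (2 * √(x * (b - x)))) x := by
  have hq : x * (b - x) ≠ 0 := (mul_pos hx.1 (sub_pos.2 hx.2)).ne'
  exact (((hasDerivAt_id' x).mul ((hasDerivAt_id' x).const_sub b)).sqrt hq).congr_deriv
    (by simp only [Pi.mul_apply]; ring)

theorem hasDerivAt_arcsin_two_mul_sub_div (hx : x ∈ Ioo 0 b) :
    HasDerivAt (fun y => arcsin ((2 * y - b) / b)) (√(x * (b - x)))⁻¹ x := by
  obtain ⟨hx0, hxb⟩ := hx
  have hb : 0 < b := hx0.trans hxb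
  have hlin : HasDerivAt (fun y => (2 * y - b) / b) (2 / b) x := by
    simpa using (((hasDerivAt_id x).const_mul 2).sub_const b).div_const b
  have h := (hasDerivAt_arcsin (by rw [ne_eq, div_eq_iff hb.ne']; linarith)
    (by rw [ne_eq, div_eq_iff hb.ne']; linarith)).comp x hlin
  have hsq : 1 - ((2 * x - b) / b) ^ 2 = (2 / b) ^ 2 * (x * (b - x)) := by
    field_simp; ring
  rw [hsq, sqrt_mul (by positivity), sqrt_sq (by positivity)] at h
  exact h.congr_deriv (by field_simp)

theorem hasDerivAt_arcsin_linearFractional (hbK : b < K) (hx : x ∈ Ioo 0 b) :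
    HasDerivAt (fun y => arcsin ((b * K - (2 * K - b) * y) / (b * (K - y))))
      (-√(K * (K - b)) / (√(x * (b - x)) * (K - x))) x := by
  obtain ⟨hx0, hxb⟩ := hx
  have hb : 0 < b := hx0.trans hxb
  have hKx : 0 < K - x := by linarith
  have hD : 0 < b * (K - x) := mul_pos hb hKx
  have hc : 0 < √(K * (K - b)) := sqrt_pos.2 (mul_pos (by linarith) (by linarith))
  have hσ : 0 < √(x * (b - x)) := sqrt_pos.2 (mul_pos hx0 (by linarith))
  have hc2 := sq_sqrt (mul_pos (by linarith : 0 < K) (by linarith : 0 < K - b)).le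
  have hσ2 := sq_sqrt (mul_pos hx0 (by linarith : 0 < b - x)).le
  have hw : HasDerivAt (fun y => (b * K - (2 * K - b) * y) / (b * (K - y)))
      (-(2 * K * (K - b)) / (b * (K - x) ^ 2)) x := by
    refine (((hasDerivAt_id' x).const_mul (2 * K - b)).const_sub (b * K) |>.div
      (((hasDerivAt_id' x).const_sub K).const_mul b) hD.ne').congr_deriv ?_
    field_simp; ring
  have hsq : 1 - ((b * K - (2 * K - b) * x) / (b * (K - x))) ^ 2
      = (2 * √(K * (K - b)) * √(x * (b - x)) / (b * (K - x))) ^ 2 := by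
    simp only [div_pow, mul_pow, hc2, hσ2]; field_simp; ring
  have hlt : ((b * K - (2 * K - b) * x) / (b * (K - x))) ^ 2 < 1 := by
    have : 0 < (2 * √(K * (K - b)) * √(x * (b - x)) / (b * (K - x))) ^ 2 := by positivity
    linarith
  have h := (hasDerivAt_arcsin (by nlinarith) (by nlinarith)).comp x hw
  rw [hsq, sqrt_sq (by positivity)] at h
  exact h.congr_deriv (by field_simp; rw [hc2])

theorem hasDerivAt_sqrt_mul_sub_mul_arcsin_linearFractional (hbK : b ≤ K)
    (hx : x ∈ Ioo 0 b) :
    HasDerivAt (fun y => √(K * (K - b)) * arcsin ((b * K - (2 * K - b) * y) / (b * (K - y))))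
      (-(K * (K - b)) / (√(x * (b - x)) * (K - x))) x := by
  rcases hbK.lt_or_eq with hlt | rfl
  · have hc2 := mul_self_sqrt (mul_pos (by linarith [hx.1, hx.2] : 0 < K) (sub_pos.2 hlt)).le
    refine ((hasDerivAt_arcsin_linearFractional hlt hx).const_mul _).congr_deriv ?_
    rw [neg_div, mul_neg, ← mul_div_assoc, hc2, neg_div]
  · simpa using hasDerivAt_const x (0 : ℝ)

/-- The last `arcsin` has a Möbius argument sending `0, b` to `1, -1`. When `b = K` that argument
is `1` except for the junk value `0/0` at `x = b`, and its coefficient vanishes. -/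
noncomputable def cauchyPrimitive (K b x : ℝ) : ℝ :=
  -√(x * (b - x)) + (K - b / 2) * arcsin ((2 * x - b) / b)
    + √(K * (K - b)) * arcsin ((b * K - (2 * K - b) * x) / (b * (K - x)))

theorem hasDerivAt_cauchyPrimitive (hbK : b ≤ K) (hx : x ∈ Ioo 0 b) :
    HasDerivAt (cauchyPrimitive K b) (√(x * (b - x)) / (K - x)) x := by
  have hσ2 := mul_self_sqrt (mul_pos hx.1 (sub_pos.2 hx.2)).le
  have hσ : 0 < √(x * (b - x)) := sqrt_pos.2 (mul_pos hx.1 (sub_pos.2 hx.2))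
  have hKx : 0 < K - x := by linarith [hx.2]
  refine (((hasDerivAt_sqrt_mul_sub hx).neg.add
    ((hasDerivAt_arcsin_two_mul_sub_div hx).const_mul (K - b / 2))).add
    (hasDerivAt_sqrt_mul_sub_mul_arcsin_linearFractional hbK hx)).congr_deriv ?_
  field_simp
  linear_combination (-2) * hσ2

theorem continuousOn_cauchyPrimitive (hb : 0 < b) (hbK : b ≤ K) :
    ContinuousOn (cauchyPrimitive K b) (Icc 0 b) := by
  rcases hbK.lt_or_eq with hlt | rfl
  · have hden : ∀ x ∈ Icc 0 b, b * (K - x) ≠ 0 := fun x hx =>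
      (mul_pos hb (by linarith [hx.2])).ne'
    unfold cauchyPrimitive
    fun_prop (disch := assumption)
  · unfold cauchyPrimitive
    simp only [sub_self, mul_zero, sqrt_zero, zero_mul, add_zero]
    fun_prop

theorem cauchyPrimitive_sub (hb : 0 < b) (hbK : b ≤ K) :
    cauchyPrimitive K b b - cauchyPrimitive K b 0 = π * (K - b / 2 - √(K * (K - b))) := by
  have h3 : √(K * (K - b)) * arcsin ((b * K - (2 * K - b) * b) / (b * (K - b)))
      = -(√(K * (K - b)) * (π / 2)) := by
    rcases hbK.lt_or_eq with hlt | rfl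
    · rw [show b * K - (2 * K - b) * b = -(b * (K - b)) by ring, neg_div,
        div_self (mul_pos hb (sub_pos.2 hlt)).ne', arcsin_neg_one]; ring
    · simp
  simp only [cauchyPrimitive, sub_self, mul_zero, sub_zero, zero_mul, sqrt_zero, h3]
  rw [show (2 * b - b) / b = 1 by field_simp; ring,
    show (0 - b) / b = -1 by rw [zero_sub, neg_div, div_self hb.ne'],
    show b * K / (b * K) = 1 from div_self (mul_pos hb (hb.trans_le hbK)).ne',
    arcsin_one, arcsin_neg_one]
  ring

theorem intervalIntegrable_sqrt_mul_sub_div_sub (hb : 0 < b) (hbK : b ≤ K) :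
    IntervalIntegrable (fun x => √(x * (b - x)) / (K - x)) volume 0 b := by
  refine intervalIntegrable_deriv_of_nonneg (g := cauchyPrimitive K b) ?_ ?_ ?_
  · simpa [uIcc_of_le hb.le] using continuousOn_cauchyPrimitive hb hbK
  · simpa [hb.le] using fun x hx => hasDerivAt_cauchyPrimitive hbK hx
  · simp only [hb.le, min_eq_left, max_eq_right]
    exact fun x hx => div_nonneg (sqrt_nonneg _) (by linarith [hx.2])

theorem integral_sqrt_mul_sub_div_sub (hb : 0 < b) (hbK : b ≤ K) :
    ∫ x in (0)..b, √(x * (b - x)) / (K - x) = π * (K - b / 2 - √(K * (K - b))) := by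
  rw [integral_eq_sub_of_hasDeriv_right_of_le hb.le (continuousOn_cauchyPrimitive hb hbK)
    (fun x hx => (hasDerivAt_cauchyPrimitive hbK hx).hasDerivWithinAt)
    (intervalIntegrable_sqrt_mul_sub_div_sub hb hbK), cauchyPrimitive_sub hb hbK]

theorem integral_mul_sqrt_mul_sub_div_sub (hb : 0 < b) (hbK : b ≤ K) :
    ∫ x in (0)..b, x * √(x * (b - x)) / (K - x)
      = π * (K * (K - b / 2 - √(K * (K - b))) - b ^ 2 / 8) := by
  have hsplit : ∀ x ∈ uIcc 0 b,
      x * √(x * (b - x)) / (K - x) = K * (√(x * (b - x)) / (K - x)) - √(x * (b - x)) := by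
    intro x hx
    rw [uIcc_of_le hb.le] at hx
    rcases (hx.2.trans hbK).lt_or_eq with hlt | rfl
    · field_simp [(sub_pos.2 hlt).ne']; ring
    · simp [sqrt_eq_zero'.2 (mul_nonpos_of_nonneg_of_nonpos hx.1 (sub_nonpos.2 hbK))]
  rw [integral_congr hsplit,
    integral_sub ((intervalIntegrable_sqrt_mul_sub_div_sub hb hbK).const_mul K)
      (Continuous.intervalIntegrable (by fun_prop) _ _),
    intervalIntegral.integral_const_mul, integral_sqrt_mul_sub_div_sub hb hbK,
    integral_sqrt_mul_sub hb.le]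
  ring

end

theorem sq_mul_nu_eq {K : ℝ} (hK : 0 < K) (x : ℝ) :
    x ^ 2 * ((1 / (2 * π)) * √(4 * K * (K - 1) * x - K ^ 2 * x ^ 2) / (K * x - x ^ 2))
      = K / (2 * π) * (x * √(x * (4 * (K - 1) / K - x)) / (K - x)) := by
  rw [show 4 * K * (K - 1) * x - K ^ 2 * x ^ 2 = K ^ 2 * (x * (4 * (K - 1) / K - x)) by
    field_simp, sqrt_mul (sq_nonneg K), sqrt_sq hK.le]
  rcases eq_or_ne x 0 with rfl | hx
  · simp
  rw [show K * x - x ^ 2 = x * (K - x) by ring]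
  field_simp

/-- For `k ≥ 2`, the second moment of the density `ν_k` equals `2 - 1/k`. -/
theorem nu_k_second_moment (k : ℕ) (hk : 2 ≤ k) :
    ∫ x in Set.Ioo (0:ℝ) (4 * ((k:ℝ) - 1) / k),
      x ^ 2 * ((1 / (2 * π)) * Real.sqrt (4 * k * ((k:ℝ) - 1) * x - (k:ℝ) ^ 2 * x ^ 2)
        / ((k:ℝ) * x - x ^ 2)) = 2 - 1 / (k:ℝ) := by
  have hK : (2 : ℝ) ≤ k := by exact_mod_cast hk
  have hK0 : (0 : ℝ) < k := by linarith
  have hgap : (k:ℝ) * (k - 4 * (k - 1) / k) = (k - 2) ^ 2 := by field_simp; ring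
  have hb : 0 < 4 * ((k:ℝ) - 1) / k := div_pos (by linarith) hK0
  have hbK : 4 * ((k:ℝ) - 1) / k ≤ k :=
    sub_nonneg.1 (nonneg_of_mul_nonneg_right (hgap ▸ sq_nonneg _) hK0)
  have hc : √((k:ℝ) * (k - 4 * (k - 1) / k)) = k - 2 := by rw [hgap, sqrt_sq (by linarith)]
  simp_rw [sq_mul_nu_eq hK0]
  rw [integral_const_mul, ← integral_Ioc_eq_integral_Ioo,
    ← intervalIntegral.integral_of_le hb.le, integral_mul_sqrt_mul_sub_div_sub hb hbK, hc]
  field_simp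
  ring
end

section
/- The m-th moment of the Marchenko–Pastur density (1/(2π))√(4/x − 1) on (0,4) equals the Catalan number C_m = (1/(m+1))·binom(2m, m), for every natural number m. -/
open Real MeasureTheory

/-!
Substituting `x = 4 sin² φ` turns the `m`-th moment into
`(4 ^ (m + 1) / π) ∫₀^{π/2} sin^{2m} φ cos² φ dφ`, and Wallis' reduction formula evaluates this
integral as `(π / 2) · binom(2m, m) / (4 ^ m · (2m + 2))`.
-/

theorem integral_Ioo_eq_integral_sin_sq_smul {F : Type*} [NormedAddCommGroup F]
    [NormedSpace ℝ F] {a : ℝ} (ha : 0 ≤ a) (g : ℝ → F) :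
    ∫ x in Set.Ioo 0 a, g x =
      ∫ φ in Set.Ioo 0 (π / 2), (2 * a * sin φ * cos φ) • g (a * sin φ ^ 2) := by
  have hderiv (φ : ℝ) : HasDerivAt (fun φ => a * sin φ ^ 2) (2 * a * sin φ * cos φ) φ :=
    (((hasDerivAt_sin φ).pow 2).const_mul a).congr_deriv (by ring)
  have hderiv_nonneg (φ : ℝ) (hφ : φ ∈ Set.Ioo 0 (π / 2)) : 0 ≤ 2 * a * sin φ * cos φ := by
    have := sin_pos_of_pos_of_lt_pi hφ.1 (by linarith [hφ.2, pi_pos])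
    have := cos_pos_of_mem_Ioo ⟨by linarith [hφ.1, pi_pos], hφ.2⟩
    positivity
  have h := integral_Icc_deriv_smul_of_deriv_nonneg (g := g) (by fun_prop)
    (fun φ _ => hderiv φ) hderiv_nonneg (by positivity)
  simp only [sin_zero, sin_pi_div_two] at h
  rw [integral_Icc_eq_integral_Ioo, integral_Icc_eq_integral_Ioo] at h
  simpa using h.symm

theorem sqrt_inv_sin_sq_sub_one {φ : ℝ} (hs : 0 < sin φ) (hc : 0 ≤ cos φ) :
    √((sin φ ^ 2)⁻¹ - 1) = cos φ / sin φ := by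
  have : (sin φ ^ 2)⁻¹ - 1 = (cos φ / sin φ) ^ 2 := by
    field_simp
    linarith [sin_sq_add_cos_sq φ]
  rw [this, sqrt_sq (by positivity)]

theorem integral_sin_pow_even_zero_pi_div_two (n : ℕ) :
    ∫ x in 0..π / 2, sin x ^ (2 * n) = π / 2 * n.centralBinom / 4 ^ n := by
  induction n with
  | zero => simp
  | succ n ih =>
    have hrec : ((n + 1 : ℕ) : ℝ) * (n + 1).centralBinom = 2 * (2 * n + 1) * n.centralBinom :=
      mod_cast Nat.succ_mul_centralBinom_succ n
    rw [mul_add_one, integral_sin_pow, ih]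
    simp only [sin_zero, cos_pi_div_two, ne_eq, add_eq_zero, one_ne_zero, and_false,
      not_false_eq_true, zero_pow, zero_mul, mul_zero, sub_zero, zero_div, zero_add]
    push_cast at hrec ⊢
    field_simp
    linear_combination (-2 * 4 ^ n) * hrec

theorem integral_sin_pow_mul_cos_sq_zero_pi_div_two (n : ℕ) :
    ∫ x in 0..π / 2, sin x ^ n * cos x ^ 2 = (∫ x in 0..π / 2, sin x ^ n) / (n + 2) := by
  have hcos (x : ℝ) : sin x ^ n * cos x ^ 2 = sin x ^ n - sin x ^ (n + 2) := by
    rw [cos_sq', pow_add]; ring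
  simp_rw [hcos]
  rw [intervalIntegral.integral_sub (by apply Continuous.intervalIntegrable; fun_prop)
    (by apply Continuous.intervalIntegrable; fun_prop), integral_sin_pow]
  simp only [sin_zero, cos_pi_div_two]
  field_simp
  ring

/-- The `m`-th moment of the Marchenko–Pastur density equals the Catalan number
`C_m = binom(2m, m)/(m+1)`. -/
theorem MP_moments_eq_catalan (m : ℕ) :
    ∫ x in Set.Ioo (0:ℝ) 4, x ^ m * ((1 / (2 * π)) * Real.sqrt (4 / x - 1))
      = (Nat.choose (2 * m) m : ℝ) / (m + 1) := by
  have hintegrand : ∀ φ ∈ Set.Ioo 0 (π / 2),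
      (2 * 4 * sin φ * cos φ) •
          ((4 * sin φ ^ 2) ^ m * ((1 / (2 * π)) * √(4 / (4 * sin φ ^ 2) - 1)))
        = 4 ^ (m + 1) / π * (sin φ ^ (2 * m) * cos φ ^ 2) := by
    intro φ hφ
    have hs := sin_pos_of_pos_of_lt_pi hφ.1 (by linarith [hφ.2, pi_pos])
    have hc := cos_pos_of_mem_Ioo ⟨by linarith [hφ.1, pi_pos], hφ.2⟩
    rw [smul_eq_mul, div_mul_cancel_left₀ (four_ne_zero' ℝ), sqrt_inv_sin_sq_sub_one hs hc.le]
    field_simp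
    ring
  rw [integral_Ioo_eq_integral_sin_sq_smul zero_le_four, setIntegral_congr_fun measurableSet_Ioo
    hintegrand, integral_const_mul, ← integral_Ioc_eq_integral_Ioo,
    ← intervalIntegral.integral_of_le (by positivity), integral_sin_pow_mul_cos_sq_zero_pi_div_two,
    integral_sin_pow_even_zero_pi_div_two, ← Nat.centralBinom_eq_two_mul_choose]
  field_simp
  push_cast
  ring
end

section
/- The average entropy of the Marchenko–Pastur distribution equals −1/2; that is, ∫₀⁴ (−x ln x)·(1/(2π))√(4/x − 1) dx = −1/2. -/
/-!
Substituting `x = 4 sin² θ` turns `∫₀⁴ √(x(4-x)) log x dx` into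
`∫₀^{π/2} 8 (1 - cos 4θ) (log 2 + log sin θ) dθ`. The `log 2` terms cancel against the classical
`∫₀^{π/2} log sin θ dθ = -(π/2) log 2`, and `∫₀^{π/2} cos 4θ log sin θ dθ = -π/8` by integration
by parts against the primitive `sin 4θ / 4 = cos θ cos 2θ sin θ`, which kills the logarithmic
singularity at `0`. Hence the integral is `π`, and the mean entropy is `-π / (2π) = -1/2`.
-/

open Real MeasureTheory
open Set

theorem continuous_sqrt_mul_log : Continuous fun x : ℝ => √x * log x := by
  have h : (fun x : ℝ => √x * log x) = fun x => 2 * (√x * log √x) := by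
    funext x
    rcases le_or_gt 0 x with hx | hx
    · rw [log_sqrt hx]; ring
    · simp [sqrt_eq_zero'.2 hx.le]
  rw [h]
  exact continuous_const.mul (continuous_mul_log.comp continuous_sqrt)

theorem integral_cos_four_mul_zero_pi_div_two : ∫ θ in (0:ℝ)..π / 2, cos (4 * θ) = 0 := by
  rw [intervalIntegral.integral_comp_mul_left (fun θ => cos θ) (by norm_num : (4:ℝ) ≠ 0),
    integral_cos, show 4 * (π / 2) = 2 * π by ring]
  simp

-- `sin 4θ / 4` written as `cos θ cos 2θ sin θ`, minus a primitive of `cos² θ cos 2θ`.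
theorem hasDerivAt_cos_four_mul_mul_log_sin_primitive {θ : ℝ} (hs : sin θ ≠ 0) :
    HasDerivAt (fun θ => cos θ * cos (2 * θ) * (sin θ * log (sin θ))
        - (θ / 4 + sin (2 * θ) / 4 + sin (4 * θ) / 16))
      (cos (4 * θ) * log (sin θ)) θ := by
  have h2 := (hasDerivAt_id θ).const_mul 2
  have h4 := (hasDerivAt_id θ).const_mul 4
  have h := (((hasDerivAt_cos θ).mul h2.cos).mul
    ((hasDerivAt_sin θ).mul ((hasDerivAt_sin θ).log hs))).sub
    ((((hasDerivAt_id θ).div_const 4).add (h2.sin.div_const 4)).add (h4.sin.div_const 16))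
  refine h.congr_deriv ?_
  have hc4 : cos (4 * θ) = 2 * cos (2 * θ) ^ 2 - 1 := by rw [← cos_two_mul]; ring_nf
  simp only [id, mul_one, Pi.mul_apply, mul_div_cancel₀ _ hs, hc4, cos_two_mul, sin_two_mul]
  linear_combination (1 - 6 * cos θ ^ 2) * log (sin θ) * sin_sq_add_cos_sq θ

theorem intervalIntegrable_cos_four_mul_mul_log_sin (a b : ℝ) :
    IntervalIntegrable (fun θ => cos (4 * θ) * log (sin θ)) volume a b :=
  intervalIntegrable_log_sin.continuousOn_mul (by fun_prop)

theorem integral_cos_four_mul_mul_log_sin :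
    ∫ θ in (0:ℝ)..π / 2, cos (4 * θ) * log (sin θ) = -(π / 8) := by
  rw [intervalIntegral.integral_eq_sub_of_hasDerivAt_of_le (by positivity) (by fun_prop)
    (fun θ hθ => hasDerivAt_cos_four_mul_mul_log_sin_primitive
      (sin_pos_of_pos_of_lt_pi hθ.1 (by linarith [hθ.2, pi_pos])).ne')
    (intervalIntegrable_cos_four_mul_mul_log_sin _ _)]
  rw [show 2 * (π / 2) = π by ring, show 4 * (π / 2) = 2 * π by ring]
  simp
  ring

theorem continuous_sqrt_mul_sqrt_sub_mul_log (a : ℝ) :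
    Continuous fun x : ℝ => √x * √(a - x) * log x := by
  have h : (fun x : ℝ => √x * √(a - x) * log x) = fun x => √(a - x) * (√x * log x) := by
    funext x; ring
  rw [h]
  exact (by fun_prop : Continuous fun x : ℝ => √(a - x)).mul continuous_sqrt_mul_log

theorem integral_sqrt_mul_sqrt_four_sub_mul_log_eq :
    ∫ x in (0:ℝ)..4, √x * √(4 - x) * log x
      = ∫ θ in (0:ℝ)..π / 2, 8 * (1 - cos (4 * θ)) * (log 2 + log (sin θ)) := by
  have hsubst := intervalIntegral.integral_comp_mul_deriv (a := 0) (b := π / 2)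
    (f := fun θ => 4 * sin θ ^ 2) (f' := fun θ => 8 * sin θ * cos θ)
    (g := fun x => √x * √(4 - x) * log x)
    (fun θ _ => (((hasDerivAt_sin θ).pow 2).const_mul 4).congr_deriv (by ring))
    (by fun_prop) (continuous_sqrt_mul_sqrt_sub_mul_log 4)
  simp only [sin_zero, sin_pi_div_two] at hsubst
  norm_num only at hsubst
  rw [← hsubst]
  refine intervalIntegral.integral_congr fun θ hθ => ?_
  rw [uIcc_of_le (by positivity)] at hθ
  have hs : 0 ≤ sin θ := sin_nonneg_of_nonneg_of_le_pi hθ.1 (by linarith [hθ.2, pi_pos])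
  have hc : 0 ≤ cos θ := cos_nonneg_of_mem_Icc ⟨by linarith [hθ.1, pi_pos], hθ.2⟩
  have h1 : √(4 * sin θ ^ 2) = 2 * sin θ := by
    rw [show 4 * sin θ ^ 2 = (2 * sin θ) ^ 2 by ring, sqrt_sq (by positivity)]
  have h2 : √(4 - 4 * sin θ ^ 2) = 2 * cos θ := by
    rw [show 4 - 4 * sin θ ^ 2 = (2 * cos θ) ^ 2 by nlinarith [sin_sq_add_cos_sq θ],
      sqrt_sq (by positivity)]
  have h4 : 1 - cos (4 * θ) = 8 * sin θ ^ 2 * cos θ ^ 2 := by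
    rw [show 4 * θ = 2 * (2 * θ) by ring, cos_two_mul, cos_two_mul]
    linear_combination (-8 * cos θ ^ 2) * sin_sq_add_cos_sq θ
  simp only [Function.comp_apply, h1, h2, h4]
  rcases hs.eq_or_lt with hzero | hpos
  · simp [← hzero]
  · rw [log_mul (by norm_num) (by positivity), log_pow, show (4:ℝ) = 2 ^ 2 by norm_num, log_pow]
    push_cast
    ring

theorem integral_sqrt_mul_sqrt_four_sub_mul_log :
    ∫ x in (0:ℝ)..4, √x * √(4 - x) * log x = π := by
  have hsplit : (fun θ => 8 * (1 - cos (4 * θ)) * (log 2 + log (sin θ)))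
      = fun θ => (8 * log 2 - 8 * log 2 * cos (4 * θ) + 8 * log (sin θ))
        - 8 * (cos (4 * θ) * log (sin θ)) := by
    funext θ; ring
  have hcont {f : ℝ → ℝ} (hf : Continuous f) : IntervalIntegrable f volume 0 (π / 2) :=
    hf.intervalIntegrable _ _
  have hlog : IntervalIntegrable (fun θ => 8 * log (sin θ)) volume 0 (π / 2) :=
    intervalIntegrable_log_sin.const_mul 8
  rw [integral_sqrt_mul_sqrt_four_sub_mul_log_eq, hsplit,
    intervalIntegral.integral_sub ((hcont (by fun_prop)).add hlog)
      ((intervalIntegrable_cos_four_mul_mul_log_sin _ _).const_mul 8),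
    intervalIntegral.integral_add (hcont (by fun_prop)) hlog,
    intervalIntegral.integral_sub (hcont (by fun_prop)) (hcont (by fun_prop)),
    intervalIntegral.integral_const_mul, intervalIntegral.integral_const_mul,
    intervalIntegral.integral_const_mul, intervalIntegral.integral_const_mul,
    intervalIntegral.integral_const, integral_cos_four_mul_zero_pi_div_two,
    integral_log_sin_zero_pi_div_two, integral_cos_four_mul_mul_log_sin]
  simp
  ring

/-- The average entropy of the Marchenko–Pastur distribution equals `-1/2`. -/
theorem MP_mean_entropy :
    ∫ x in Set.Ioo (0:ℝ) 4,
      (-x * Real.log x) * ((1 / (2 * π)) * Real.sqrt (4 / x - 1)) = -(1 / 2) := by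
  have hdensity : ∀ x ∈ Ioo (0:ℝ) 4, (-x * log x) * ((1 / (2 * π)) * √(4 / x - 1))
      = -(1 / (2 * π)) * (√x * √(4 - x) * log x) := by
    intro x hx
    have hx0 : 0 < x := hx.1
    rw [show 4 / x - 1 = (4 - x) / x by field_simp, sqrt_div' _ hx0.le]
    have : √x ≠ 0 := (sqrt_pos.2 hx0).ne'
    field_simp
    rw [sq_sqrt hx0.le]
    ring
  rw [setIntegral_congr_fun measurableSet_Ioo hdensity, integral_const_mul,
    ← integral_Ioc_eq_integral_Ioo, ← intervalIntegral.integral_of_le (by norm_num),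
    integral_sqrt_mul_sqrt_four_sub_mul_log]
  field_simp
end

section
/- The density π⁽²⁾(x) = (∛2·√3)/(12π) · [∛2 (27 + 3√(81−12x))^{2/3} − 6 x^{1/3}] / [x^{2/3} (27 + 3√(81−12x))^{1/3}] on (0, 27/4) integrates to 1. -/
/-!
Substitute `x = 27 t³ / (1 + t³)²`, which maps `(0, 1)` increasingly onto `(0, 27/4)`.
Then `√(81 - 12x) = 9 (1 - t³) / (1 + t³)` and both cube roots in the density become explicit
(`x^{1/3} = 3t / r²`, `(27 + 3√(81 - 12x))^{1/3} = 3 ∛2 / r` with `r = ∛(1 + t³)`), so the density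
pulls back to the rational function `(9√3 / 2π) (1 - t)(1 - t³) / (1 + t³)²`. Its primitive is
`t (1 - t) / (1 + t³) + arctan ((2t - 1) / √3) / √3`, whose increment over `[0, 1]` is
`(π/6 + π/6) / √3`.
-/

open Real MeasureTheory Set

lemma Real.pow_three_rpow_one_div_three {y : ℝ} (hy : 0 ≤ y) :
    (y ^ 3) ^ ((1:ℝ)/3) = y := by
  simpa [one_div] using pow_rpow_inv_natCast hy three_ne_zero

lemma Real.pow_three_rpow_two_div_three {y : ℝ} (hy : 0 ≤ y) :
    (y ^ 3) ^ ((2:ℝ)/3) = y ^ 2 := by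
  rw [div_eq_mul_one_div 2, mul_comm, rpow_mul (by positivity), pow_three_rpow_one_div_three hy]
  norm_cast

namespace FussCatalan2

noncomputable def density (x : ℝ) : ℝ :=
  ((2:ℝ) ^ ((1:ℝ)/3) * Real.sqrt 3) / (12 * π) *
    (((2:ℝ) ^ ((1:ℝ)/3) * (27 + 3 * Real.sqrt (81 - 12 * x)) ^ ((2:ℝ)/3)
      - 6 * x ^ ((1:ℝ)/3))
      / (x ^ ((2:ℝ)/3) * (27 + 3 * Real.sqrt (81 - 12 * x)) ^ ((1:ℝ)/3)))

noncomputable def param (t : ℝ) : ℝ := 27 * t ^ 3 / (1 + t ^ 3) ^ 2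

noncomputable def primitive (t : ℝ) : ℝ :=
  t * (1 - t) / (1 + t ^ 3) + arctan ((2 * t - 1) / √3) / √3

noncomputable def pullbackDensity (t : ℝ) : ℝ :=
  9 * √3 / (2 * π) * ((1 - t) * (1 - t ^ 3) / (1 + t ^ 3) ^ 2)

lemma hasDerivAt_param {t : ℝ} (ht : 1 + t ^ 3 ≠ 0) :
    HasDerivAt param (81 * t ^ 2 * (1 - t ^ 3) / (1 + t ^ 3) ^ 3) t := by
  have h := ((hasDerivAt_pow 3 t).const_mul 27).fun_div
    (((hasDerivAt_pow 3 t).const_add 1).fun_pow 2) (pow_ne_zero 2 ht)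
  refine h.congr_deriv ?_
  field_simp
  ring

lemma param_mem_Ioo {t : ℝ} (ht : t ∈ Ioo (0:ℝ) 1) : param t ∈ Ioo 0 (27 / 4) := by
  obtain ⟨h0, h1⟩ := ht
  have hu0 : 0 < t ^ 3 := by positivity
  have hu1 : t ^ 3 < 1 := pow_lt_one₀ h0.le h1 (by norm_num)
  unfold param
  constructor
  · positivity
  · rw [div_lt_iff₀ (by positivity)]
    nlinarith [sq_pos_of_pos (sub_pos.2 hu1)]

lemma continuousOn_param : ContinuousOn param (Icc 0 1) := fun t ht =>
  (hasDerivAt_param (by have := ht.1; positivity)).continuousAt.continuousWithinAt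

lemma strictMonoOn_param : StrictMonoOn param (Icc 0 1) := by
  refine strictMonoOn_of_deriv_pos (convex_Icc 0 1) continuousOn_param fun t ht => ?_
  rw [interior_Icc] at ht
  obtain ⟨h0, h1⟩ := ht
  have hu1 : 0 < 1 - t ^ 3 := sub_pos.2 (pow_lt_one₀ h0.le h1 (by norm_num))
  rw [(hasDerivAt_param (by positivity)).deriv]
  positivity

lemma image_param_Ioo : param '' Ioo 0 1 = Ioo 0 (27 / 4) := by
  refine subset_antisymm (image_subset_iff.2 fun t ht => param_mem_Ioo ht) ?_
  have h := intermediate_value_Ioo zero_le_one continuousOn_param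
  rwa [show param 0 = 0 by norm_num [param], show param 1 = 27 / 4 by norm_num [param]] at h

lemma sqrt_81_sub_12_mul_param {t : ℝ} (h0 : 0 ≤ t) (h1 : t ≤ 1) :
    √(81 - 12 * param t) = 9 * (1 - t ^ 3) / (1 + t ^ 3) := by
  have hu1 : t ^ 3 ≤ 1 := pow_le_one₀ h0 h1
  have hnonneg : 0 ≤ 9 * (1 - t ^ 3) / (1 + t ^ 3) := div_nonneg (by linarith) (by positivity)
  have hsq : 81 - 12 * param t = (9 * (1 - t ^ 3) / (1 + t ^ 3)) ^ 2 := by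
    unfold param; field_simp; ring
  rw [hsq, sqrt_sq hnonneg]

lemma density_param {t : ℝ} (h0 : 0 < t) (h1 : t ≤ 1) :
    density (param t) = √3 * (1 - t) * (1 + t ^ 3) / (18 * π * t ^ 2) := by
  unfold density
  set c := (2:ℝ) ^ ((1:ℝ)/3)
  set r := (1 + t ^ 3) ^ ((1:ℝ)/3)
  have hc : c ^ 3 = 2 := by simpa [c, one_div] using rpow_inv_natCast_pow zero_le_two three_ne_zero
  have hr : r ^ 3 = 1 + t ^ 3 := by
    simpa [r, one_div] using rpow_inv_natCast_pow (by positivity : 0 ≤ 1 + t ^ 3) three_ne_zero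
  have hc0 : 0 < c := by positivity
  have hr0 : 0 < r := by positivity
  have hx : param t = (3 * t / r ^ 2) ^ 3 := by
    unfold param; rw [← hr]; field_simp; ring
  have hA : 27 + 3 * √(81 - 12 * param t) = (3 * c / r) ^ 3 := by
    rw [sqrt_81_sub_12_mul_param h0.le h1, ← hr]
    field_simp
    linear_combination 27 * hr - 27 * hc
  rw [hA, hx, pow_three_rpow_one_div_three (by positivity), pow_three_rpow_two_div_three (by positivity),
    pow_three_rpow_one_div_three (by positivity), pow_three_rpow_two_div_three (by positivity), ← hr]
  field_simp
  linear_combination 54 * hc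

lemma abs_deriv_param_mul_density_param {t : ℝ} (ht : t ∈ Ioo (0:ℝ) 1) :
    |81 * t ^ 2 * (1 - t ^ 3) / (1 + t ^ 3) ^ 3| * density (param t) = pullbackDensity t := by
  obtain ⟨h0, h1⟩ := ht
  have hu1 : t ^ 3 < 1 := pow_lt_one₀ h0.le h1 (by norm_num)
  rw [density_param h0 h1.le, abs_of_pos (div_pos (by nlinarith [pow_pos h0 2]) (by positivity)),
    pullbackDensity]
  field_simp
  ring

lemma hasDerivAt_primitive {t : ℝ} (ht : 1 + t ^ 3 ≠ 0) :
    HasDerivAt primitive (3 / 2 * ((1 - t) * (1 - t ^ 3) / (1 + t ^ 3) ^ 2)) t := by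
  have hrat := (((hasDerivAt_id' t).fun_mul ((hasDerivAt_id' t).const_sub 1)).fun_div
    ((hasDerivAt_pow 3 t).const_add 1) ht)
  have harctan := ((((hasDerivAt_id' t).const_mul 2).sub_const 1).div_const √3).arctan.div_const √3
  refine (hrat.add harctan).congr_deriv ?_
  have h3 : √3 ^ 2 = 3 := sq_sqrt (by norm_num)
  have hq : t ^ 2 - t + 1 ≠ 0 := by nlinarith [sq_nonneg (2 * t - 1)]
  field_simp
  rw [h3]
  field_simp
  ring

lemma integral_pullbackDensity : ∫ t in (0:ℝ)..1, pullbackDensity t = 1 := by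
  have hderiv : ∀ t ∈ uIcc (0:ℝ) 1,
      HasDerivAt primitive (3 / 2 * ((1 - t) * (1 - t ^ 3) / (1 + t ^ 3) ^ 2)) t := by
    intro t ht
    rw [uIcc_of_le zero_le_one] at ht
    exact hasDerivAt_primitive (by have := ht.1; positivity)
  have hcont : ContinuousOn (fun t : ℝ => 3 / 2 * ((1 - t) * (1 - t ^ 3) / (1 + t ^ 3) ^ 2))
      (uIcc 0 1) := by
    refine continuousOn_const.mul (ContinuousOn.div (by fun_prop) (by fun_prop) fun t ht => ?_)
    rw [uIcc_of_le zero_le_one] at ht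
    have := ht.1
    positivity
  have hprim : primitive 1 - primitive 0 = π / (3 * √3) := by
    norm_num [primitive, neg_div, arctan_neg, ← inv_eq_one_div, arctan_inv_sqrt_three]
    ring
  simp only [pullbackDensity]
  rw [intervalIntegral.integral_const_mul, show 9 * √3 / (2 * π) = 3 * √3 / π * (3 / 2) by ring,
    mul_assoc, ← intervalIntegral.integral_const_mul (3 / 2),
    intervalIntegral.integral_eq_sub_of_hasDerivAt hderiv hcont.intervalIntegrable, hprim]
  field_simp

end FussCatalan2

open FussCatalan2

/-- The Fuss–Catalan density of order 2 integrates to 1 over `(0, 27/4)`. -/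
theorem fussCatalan2_integrates_to_one :
    ∫ x in Set.Ioo (0:ℝ) (27 / 4),
      ((2:ℝ) ^ ((1:ℝ)/3) * Real.sqrt 3) / (12 * π) *
        (((2:ℝ) ^ ((1:ℝ)/3) * (27 + 3 * Real.sqrt (81 - 12 * x)) ^ ((2:ℝ)/3)
          - 6 * x ^ ((1:ℝ)/3))
          / (x ^ ((2:ℝ)/3) * (27 + 3 * Real.sqrt (81 - 12 * x)) ^ ((1:ℝ)/3))) = 1 := by
  change ∫ x in Ioo (0:ℝ) (27 / 4), density x = 1
  rw [← image_param_Ioo, integral_image_eq_integral_abs_deriv_smul measurableSet_Ioo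
      (fun t ht => (hasDerivAt_param (by have := ht.1; positivity)).hasDerivWithinAt)
      (strictMonoOn_param.injOn.mono Ioo_subset_Icc_self)]
  simp_rw [smul_eq_mul]
  rw [setIntegral_congr_fun measurableSet_Ioo fun t ht => abs_deriv_param_mul_density_param ht,
    ← integral_Ioc_eq_integral_Ioo, ← intervalIntegral.integral_of_le zero_le_one]
  exact integral_pullbackDensity
end

section
/- The moment generating function F_k(z) = Σ_{p≥0} τ(w_k^p) z^p with τ(w_k^p) given by the moments of the Kesten measure μ_k satisfies F_k(z) = 2(k−1)/(k−2 + k√(1−4(k−1)z)); in particular, the power series expansion of 2(k−1)/(k−2 + k√(1−4(k−1)z)) around z = 0 has coefficients equal to ∫₀^{4(k−1)} x^p dμ_k(x) where dμ_k(x) = (k/(2π))·√(4(k−1)x − x²)/(k²x − x²) dx. -/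
/-!
Expanding `1 / (1 - z x)` as a geometric series, which is dominated on the bounded support of
`μ_k`, turns the moment series into the Stieltjes-type integral `∫ dμ_k(x) / (1 - z x)`. The
substitution `x = 4(k-1) u² / (1 + u²)` rationalises `√(4(k-1)x - x²)` and, because
`k² - 4(k-1) = (k-2)²`, turns this integral into
`4(k-1)/(πk) ∫₀^∞ du / ((1 + s²u²)(1 + t²u²))` with `s = √(1 - 4(k-1)z)` and `t = (k-2)/k`.
By partial fractions the latter is `π / (2(s + t))`.
-/

open Real MeasureTheory Set Filter Topology

theorem hasSum_integral_pow_mul_mul_pow {μ : Measure ℝ} {ρ : ℝ → ℝ} {R z : ℝ}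
    (hρ : Integrable ρ μ) (hsupp : ∀ᵐ x ∂μ, |x| ≤ R) (hR : 0 ≤ R) (hz : R * |z| < 1) :
    HasSum (fun p : ℕ => (∫ x, x ^ p * ρ x ∂μ) * z ^ p) (∫ x, ρ x / (1 - z * x) ∂μ) := by
  set F : ℕ → ℝ → ℝ := fun p x => x ^ p * ρ x * z ^ p
  have hF_le : ∀ p, ∀ᵐ x ∂μ, ‖F p x‖ ≤ (R * |z|) ^ p * ‖ρ x‖ := fun p => by
    filter_upwards [hsupp] with x hx
    simp only [F, norm_mul, norm_pow, Real.norm_eq_abs, mul_pow]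
    have := pow_le_pow_left₀ (abs_nonneg x) hx p
    have : 0 ≤ |z| ^ p * |ρ x| := by positivity
    nlinarith
  have hF_int : ∀ p, Integrable (F p) μ := fun p =>
    (hρ.norm.const_mul _).mono'
      (((continuous_pow p).aestronglyMeasurable.mul hρ.1).mul_const _) (hF_le p)
  have hF_sum : Summable fun p => ∫ x, ‖F p x‖ ∂μ := by
    refine .of_nonneg_of_le (fun p => integral_nonneg fun x => norm_nonneg _) (fun p => ?_)
      ((summable_geometric_of_lt_one (by positivity) hz).mul_right (∫ x, ‖ρ x‖ ∂μ))
    rw [← integral_const_mul]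
    exact integral_mono_ae (hF_int p).norm (hρ.norm.const_mul _) (hF_le p)
  have hgeom : ∀ᵐ x ∂μ, ∑' p, F p x = ρ x / (1 - z * x) := by
    filter_upwards [hsupp] with x hx
    have hxz : ‖z * x‖ < 1 := by
      rw [Real.norm_eq_abs, abs_mul]; nlinarith [abs_nonneg z]
    simp only [F, mul_right_comm _ (ρ x), ← mul_pow, mul_comm x z]
    rw [tsum_mul_right, tsum_geometric_of_norm_lt_one hxz, div_eq_inv_mul]
  rw [← integral_congr_ae hgeom]
  simpa only [F, integral_mul_const] using hasSum_integral_of_summable_integral_norm hF_int hF_sum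

theorem tendsto_mul_arctan_mul_atTop {t : ℝ} (ht : 0 ≤ t) :
    Tendsto (fun u => t * arctan (t * u)) atTop (𝓝 (t * (π / 2))) := by
  rcases ht.eq_or_lt with rfl | ht
  · simp
  · exact ((tendsto_arctan_atTop.mono_right nhdsWithin_le_nhds).comp
      (tendsto_id.const_mul_atTop ht)).const_mul t

theorem hasDerivAt_mul_arctan_sub_mul_arctan_div {s t : ℝ} (hst : s ^ 2 ≠ t ^ 2) (u : ℝ) :
    HasDerivAt (fun u => (s * arctan (s * u) - t * arctan (t * u)) / (s ^ 2 - t ^ 2))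
      ((1 + (s * u) ^ 2) * (1 + (t * u) ^ 2))⁻¹ u := by
  have h : ∀ c : ℝ, HasDerivAt (fun u => c * arctan (c * u)) (c ^ 2 / (1 + (c * u) ^ 2)) u :=
    fun c => (((hasDerivAt_arctan (c * u)).comp u ((hasDerivAt_id u).const_mul c)).const_mul c
      ).congr_deriv (by simp only [one_div, mul_one]; ring)
  have : s ^ 2 - t ^ 2 ≠ 0 := sub_ne_zero.2 hst
  exact (((h s).sub (h t)).div_const (s ^ 2 - t ^ 2)).congr_deriv (by field_simp; ring)

theorem integrableOn_Ioi_inv_one_add_sq_mul_one_add_sq {s t : ℝ} (hs : 0 ≤ s) (ht : 0 ≤ t)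
    (hst : s ≠ t) :
    IntegrableOn (fun u => ((1 + (s * u) ^ 2) * (1 + (t * u) ^ 2))⁻¹) (Ioi 0) :=
  integrableOn_Ioi_deriv_of_nonneg' (fun u _ => hasDerivAt_mul_arctan_sub_mul_arctan_div
      ((pow_left_inj₀ hs ht two_ne_zero).not.2 hst) u)
    (fun u _ => by positivity)
    (((tendsto_mul_arctan_mul_atTop hs).sub (tendsto_mul_arctan_mul_atTop ht)).div_const _)

theorem integral_Ioi_inv_one_add_sq_mul_one_add_sq {s t : ℝ} (hs : 0 ≤ s) (ht : 0 ≤ t)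
    (hst : s ≠ t) :
    ∫ u in Ioi 0, ((1 + (s * u) ^ 2) * (1 + (t * u) ^ 2))⁻¹ = π / (2 * (s + t)) := by
  have hsq : s ^ 2 ≠ t ^ 2 := (pow_left_inj₀ hs ht two_ne_zero).not.2 hst
  rw [integral_Ioi_of_hasDerivAt_of_nonneg'
    (fun u _ => hasDerivAt_mul_arctan_sub_mul_arctan_div hsq u) (fun u _ => by positivity)
    (((tendsto_mul_arctan_mul_atTop hs).sub (tendsto_mul_arctan_mul_atTop ht)).div_const _)]
  have hadd : s + t ≠ 0 := by intro h; apply hst; linarith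
  rw [mul_zero, mul_zero, arctan_zero, mul_zero, mul_zero, sub_zero, zero_div, sub_zero,
    div_eq_div_iff (sub_ne_zero.2 hsq) (mul_ne_zero two_ne_zero hadd)]
  ring

section Substitution

variable {R : ℝ}

theorem hasDerivAt_mul_sq_div_one_add_sq (u : ℝ) :
    HasDerivAt (fun u => R * u ^ 2 / (1 + u ^ 2)) (2 * R * u / (1 + u ^ 2) ^ 2) u := by
  have h1 : 1 + u ^ 2 ≠ 0 := by positivity
  exact (((hasDerivAt_pow 2 u).const_mul R).div ((hasDerivAt_pow 2 u).const_add 1) h1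
    ).congr_deriv (by field_simp; ring)

theorem strictMonoOn_mul_sq_div_one_add_sq (hR : 0 < R) :
    StrictMonoOn (fun u => R * u ^ 2 / (1 + u ^ 2)) (Ici 0) := by
  intro a ha b _ hab
  dsimp only
  rw [div_lt_div_iff₀ (by positivity) (by positivity)]
  have : a ^ 2 < b ^ 2 := pow_lt_pow_left₀ hab ha two_ne_zero
  nlinarith

theorem image_mul_sq_div_one_add_sq_Ioi (hR : 0 < R) :
    (fun u => R * u ^ 2 / (1 + u ^ 2)) '' Ioi 0 = Ioo 0 R := by
  ext y
  constructor
  · rintro ⟨u, hu, rfl⟩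
    have hu : 0 < u := hu
    constructor
    · positivity
    · rw [div_lt_iff₀ (by positivity)]; nlinarith
  · rintro ⟨hy0, hyR⟩
    have hRy : 0 < R - y := sub_pos.2 hyR
    refine ⟨√(y / (R - y)), Real.sqrt_pos.2 (div_pos hy0 hRy), ?_⟩
    dsimp only
    rw [Real.sq_sqrt (div_pos hy0 hRy).le]
    field_simp
    ring

theorem integral_Ioo_eq_integral_Ioi_mul_sq_div_one_add_sq (hR : 0 < R) (f : ℝ → ℝ) :
    ∫ x in Ioo 0 R, f x
      = ∫ u in Ioi 0, 2 * R * u / (1 + u ^ 2) ^ 2 * f (R * u ^ 2 / (1 + u ^ 2)) := by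
  rw [← image_mul_sq_div_one_add_sq_Ioi hR, integral_image_eq_integral_abs_deriv_smul
    measurableSet_Ioi (fun u _ => (hasDerivAt_mul_sq_div_one_add_sq u).hasDerivWithinAt)
    ((strictMonoOn_mul_sq_div_one_add_sq hR).injOn.mono Ioi_subset_Ici_self)]
  refine setIntegral_congr_fun measurableSet_Ioi fun u (hu : 0 < u) => ?_
  rw [abs_of_pos (by positivity), smul_eq_mul]

theorem integrableOn_Ioo_iff_integrableOn_Ioi_mul_sq_div_one_add_sq (hR : 0 < R) (f : ℝ → ℝ) :
    IntegrableOn f (Ioo 0 R) ↔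
      IntegrableOn (fun u => 2 * R * u / (1 + u ^ 2) ^ 2 * f (R * u ^ 2 / (1 + u ^ 2)))
        (Ioi 0) := by
  rw [← image_mul_sq_div_one_add_sq_Ioi hR, integrableOn_image_iff_integrableOn_abs_deriv_smul
    measurableSet_Ioi (fun u _ => (hasDerivAt_mul_sq_div_one_add_sq u).hasDerivWithinAt)
    ((strictMonoOn_mul_sq_div_one_add_sq hR).injOn.mono Ioi_subset_Ici_self)]
  refine integrableOn_congr_fun (fun u (hu : 0 < u) => ?_) measurableSet_Ioi
  rw [abs_of_pos (by positivity), smul_eq_mul]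

end Substitution

noncomputable def kestenDensity (k x : ℝ) : ℝ :=
  k / (2 * π) * √(4 * (k - 1) * x - x ^ 2) / (k ^ 2 * x - x ^ 2)

theorem mul_kestenDensity_div_one_sub_mul {k z s u : ℝ} (hk : 1 < k)
    (hs : s ^ 2 = 1 - 4 * (k - 1) * z) (hu : 0 < u) :
    2 * (4 * (k - 1)) * u / (1 + u ^ 2) ^ 2 *
        (kestenDensity k (4 * (k - 1) * u ^ 2 / (1 + u ^ 2)) /
          (1 - z * (4 * (k - 1) * u ^ 2 / (1 + u ^ 2))))
      = 4 * (k - 1) / (π * k) * ((1 + (s * u) ^ 2) * (1 + ((k - 2) / k * u) ^ 2))⁻¹ := by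
  have hv : 0 < 1 + u ^ 2 := by positivity
  have hk0 : 0 < k := by linarith
  have hk1 : 0 < k - 1 := by linarith
  set x := 4 * (k - 1) * u ^ 2 / (1 + u ^ 2) with hx
  have hsqrt : √(4 * (k - 1) * x - x ^ 2) = 4 * (k - 1) * u / (1 + u ^ 2) := by
    rw [← Real.sqrt_sq (by positivity : 0 ≤ 4 * (k - 1) * u / (1 + u ^ 2))]
    congr 1
    rw [hx]; field_simp; ring
  have hden : k ^ 2 * x - x ^ 2
      = 4 * (k - 1) * u ^ 2 * (k ^ 2 + (k - 2) ^ 2 * u ^ 2) / (1 + u ^ 2) ^ 2 := by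
    rw [hx]; field_simp; ring
  have hres : 1 - z * x = (1 + (s * u) ^ 2) / (1 + u ^ 2) := by
    rw [hx, mul_pow, hs]; field_simp; ring
  have h1 : 0 < k ^ 2 + (k - 2) ^ 2 * u ^ 2 := by positivity
  have h2 : 0 < 1 + (s * u) ^ 2 := by positivity
  have h3 : 0 < 1 + ((k - 2) / k * u) ^ 2 := by positivity
  rw [kestenDensity, hsqrt, hden, hres]
  field_simp

theorem integrableOn_kestenDensity {k : ℝ} (hk : 2 ≤ k) :
    IntegrableOn (kestenDensity k) (Ioo 0 (4 * (k - 1))) := by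
  have hk0 : 0 < k := by linarith
  have ht : 0 ≤ (k - 2) / k := div_nonneg (by linarith) hk0.le
  have hst : (1 : ℝ) ≠ (k - 2) / k := ((div_lt_one hk0).2 (by linarith)).ne'
  rw [integrableOn_Ioo_iff_integrableOn_Ioi_mul_sq_div_one_add_sq (by linarith)]
  refine IntegrableOn.congr_fun ((integrableOn_Ioi_inv_one_add_sq_mul_one_add_sq zero_le_one ht
    hst).const_mul (4 * (k - 1) / (π * k))) (fun u (hu : 0 < u) => ?_) measurableSet_Ioi
  rw [← mul_kestenDensity_div_one_sub_mul (z := 0) (by linarith) (by ring) hu, zero_mul,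
    sub_zero, div_one]

theorem integral_kestenDensity_div_one_sub_mul {k z : ℝ} (hk : 2 ≤ k) (hz : k ^ 2 * z < 1) :
    ∫ x in Ioo 0 (4 * (k - 1)), kestenDensity k x / (1 - z * x)
      = 2 * (k - 1) / (k - 2 + k * √(1 - 4 * (k - 1) * z)) := by
  have hk0 : 0 < k := by linarith
  have hγ : 0 ≤ 1 - 4 * (k - 1) * z := by nlinarith [sq_nonneg (k - 2)]
  have ht : 0 ≤ (k - 2) / k := div_nonneg (by linarith) hk0.le
  -- `k ^ 2 * z < 1` is exactly what keeps `s = √(1 - 4(k-1)z)` away from `t = (k-2)/k`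
  have hts : (k - 2) / k < √(1 - 4 * (k - 1) * z) := by
    rw [Real.lt_sqrt ht, div_pow, div_lt_iff₀ (by positivity)]
    nlinarith
  rw [integral_Ioo_eq_integral_Ioi_mul_sq_div_one_add_sq (by linarith),
    setIntegral_congr_fun measurableSet_Ioi fun u (hu : 0 < u) =>
      mul_kestenDensity_div_one_sub_mul (by linarith) (Real.sq_sqrt hγ) hu,
    integral_const_mul,
    integral_Ioi_inv_one_add_sq_mul_one_add_sq (Real.sqrt_nonneg _) ht hts.ne']
  have : 0 < √(1 - 4 * (k - 1) * z) + (k - 2) / k := by linarith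
  field_simp
  ring

/-- The moment generating function of the Kesten measure `μ_k` equals
`2(k-1)/(k-2 + k√(1-4(k-1)z))`: on a neighbourhood of `0`, the power series
whose coefficients are the moments `∫ x^p dμ_k(x)` sums to this function. -/
theorem kesten_moment_generating_function (k : ℕ) (hk : 2 ≤ k) :
    ∃ r : ℝ, 0 < r ∧ ∀ z : ℝ, |z| < r →
      2 * ((k:ℝ) - 1) / ((k:ℝ) - 2 + k * Real.sqrt (1 - 4 * ((k:ℝ) - 1) * z))
        = ∑' p : ℕ,
            (∫ x in Set.Ioo (0:ℝ) (4 * ((k:ℝ) - 1)),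
              x ^ p * (((k:ℝ) / (2 * π)) * Real.sqrt (4 * ((k:ℝ) - 1) * x - x ^ 2)
                / ((k:ℝ) ^ 2 * x - x ^ 2))) * z ^ p := by
  have hk' : (2 : ℝ) ≤ k := by exact_mod_cast hk
  refine ⟨1 / (k : ℝ) ^ 2, by positivity, fun z hz => ?_⟩
  have hkz : (k : ℝ) ^ 2 * |z| < 1 := by rwa [lt_div_iff₀ (by positivity), mul_comm] at hz
  have hsupp :
      ∀ᵐ x ∂(volume.restrict (Ioo 0 (4 * ((k : ℝ) - 1)))), |x| ≤ 4 * ((k : ℝ) - 1) :=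
    (ae_restrict_mem measurableSet_Ioo).mono fun x hx => abs_le.2 ⟨by linarith [hx.1], hx.2.le⟩
  have hsum := hasSum_integral_pow_mul_mul_pow (integrableOn_kestenDensity hk') hsupp
    (by linarith) (by nlinarith [sq_nonneg ((k : ℝ) - 2), abs_nonneg z])
  rw [integral_kestenDensity_div_one_sub_mul hk' (by nlinarith [le_abs_self z])] at hsum
  exact hsum.tsum_eq.symm
end

section
/- The second moment of the Bures asymptotic density P_B on [0, 3√3] equals 5/2, where P_B(x) = (1/(4π√3))·[ (a/x + √((a/x)² − 1))^{2/3} − (a/x − √((a/x)² − 1))^{2/3} ] with a = 3√3. -/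
/-!
With `x = a sin θ` and `t = tan (θ / 2)` one has `a / x ± √((a / x)² - 1) = t^(∓1)`, so the density
kernel is `t^(-2/3) - t^(2/3)`. The further substitution `t = y³`, i.e. `x = 2a y³ / (1 + y⁶)`, turns
`∫₀ᵃ x² (t^(-2/3) - t^(2/3)) dx` into `24 a³ ∫₀¹ y⁶ (1 - y⁴)(1 - y⁶) / (1 + y⁶)⁴ dy`. That integrand
has an elementary primitive, a rational function plus arctangents coming from
`1 + y⁶ = (1 + y²)(y² - √3 y + 1)(y² + √3 y + 1)`, with value `5π / 972` at `1`; so the moment is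
`10π a³ / 81`, which is `5 / 2` after the normalisation `1 / (4π√3)` at `a = 3√3`. Since the
integrand is nonnegative, the fundamental theorem of calculus applies to the composed primitive
without a separate integrability argument.
-/

open Real MeasureTheory

namespace Bures

noncomputable def arctanSum (y : ℝ) : ℝ :=
  2 * arctan y + arctan (2 * y - √3) + arctan (2 * y + √3)

theorem hasDerivAt_arctanSum (y : ℝ) :
    HasDerivAt arctanSum (3 * (1 + y ^ 4) / (1 + y ^ 6)) y := by
  have h3 : √3 ^ 2 = 3 := sq_sqrt (by norm_num)
  have hlin : HasDerivAt (fun t => 2 * t) 2 y := by simpa using (hasDerivAt_id y).const_mul 2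
  refine ((((hasDerivAt_arctan y).const_mul 2).add (hlin.sub_const √3).arctan).add
    (hlin.add_const √3).arctan).congr_deriv ?_
  have h1 : 0 < 1 + (2 * y - √3) ^ 2 := by positivity
  have h2 : 0 < 1 + (2 * y + √3) ^ 2 := by positivity
  have h4 : 0 < 1 + y ^ 2 := by positivity
  have hq : 0 < y ^ 4 - y ^ 2 + 1 := by nlinarith [sq_nonneg (y ^ 2 - 1 / 2)]
  have hpair : 1 / (1 + (2 * y - √3) ^ 2) * 2 + 1 / (1 + (2 * y + √3) ^ 2) * 2 =
      (1 + y ^ 2) / (y ^ 4 - y ^ 2 + 1) := by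
    rw [div_mul_eq_mul_div, div_mul_eq_mul_div, div_add_div _ _ h1.ne' h2.ne',
      div_eq_div_iff (mul_pos h1 h2).ne' hq.ne']
    linear_combination (-(y ^ 2 + 1) * √3 ^ 2 + 12 * y ^ 4 - y ^ 2 - 1) * h3
  rw [add_assoc, hpair, show 1 + y ^ 6 = (1 + y ^ 2) * (y ^ 4 - y ^ 2 + 1) by ring, mul_one_div,
    div_add_div _ _ h4.ne' hq.ne', div_eq_div_iff (by positivity) (by positivity)]
  ring

theorem arctanSum_zero : arctanSum 0 = 0 := by
  simp [arctanSum, arctan_neg]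

theorem arctanSum_one : arctanSum 1 = π := by
  have hinv : (2 + √3)⁻¹ = 2 - √3 :=
    inv_eq_of_mul_eq_one_right (by linear_combination -sq_sqrt (show (0 : ℝ) ≤ 3 by norm_num))
  rw [arctanSum, mul_one, arctan_one, ← hinv, arctan_inv_of_pos (by positivity)]
  ring

noncomputable def rationalPart (y : ℝ) : ℝ :=
  y * (-5 - y ^ 4 + 32 * y ^ 6 - 32 * y ^ 10 + y ^ 12 + 5 * y ^ 16) / (324 * (1 + y ^ 6) ^ 3)

theorem hasDerivAt_rationalPart (y : ℝ) :
    HasDerivAt rationalPart (y ^ 6 * (1 - y ^ 4) * (1 - y ^ 6) / (1 + y ^ 6) ^ 4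
      - 5 / 324 * (1 + y ^ 4) / (1 + y ^ 6)) y := by
  have hN := (hasDerivAt_id y).mul ((((((hasDerivAt_const y (-5 : ℝ)).sub (hasDerivAt_pow 4 y)).add
    ((hasDerivAt_pow 6 y).const_mul 32)).sub ((hasDerivAt_pow 10 y).const_mul 32)).add
    (hasDerivAt_pow 12 y)).add ((hasDerivAt_pow 16 y).const_mul 5))
  have hD := (((hasDerivAt_pow 6 y).const_add 1).pow 3).const_mul 324
  refine (hN.div hD (by simp only [Pi.pow_apply]; positivity)).congr_deriv ?_
  simp only [Pi.add_apply, Pi.sub_apply, Pi.mul_apply, Pi.pow_apply, id]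
  field_simp
  ring

noncomputable def primitive (y : ℝ) : ℝ := rationalPart y + 5 / 972 * arctanSum y

theorem hasDerivAt_primitive (y : ℝ) :
    HasDerivAt primitive (y ^ 6 * (1 - y ^ 4) * (1 - y ^ 6) / (1 + y ^ 6) ^ 4) y :=
  ((hasDerivAt_rationalPart y).add ((hasDerivAt_arctanSum y).const_mul _)).congr_deriv (by ring)

theorem continuous_primitive : Continuous primitive :=
  continuous_iff_continuousAt.2 fun y => (hasDerivAt_primitive y).continuousAt

theorem primitive_zero : primitive 0 = 0 := by
  simp [primitive, rationalPart, arctanSum_zero]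

theorem primitive_one : primitive 1 = 5 * π / 972 := by
  rw [primitive, rationalPart, arctanSum_one]
  ring

/-- For `x = a sin θ` with `0 ≤ θ ≤ π / 2` this is `tan (θ / 2)`. -/
noncomputable def halfAngleTan (a x : ℝ) : ℝ := x / (a + √(a ^ 2 - x ^ 2))

section HalfAngleTan

variable {a x : ℝ}

theorem add_sqrt_sq_sub_sq_pos (ha : 0 < a) (x : ℝ) : 0 < a + √(a ^ 2 - x ^ 2) :=
  add_pos_of_pos_of_nonneg ha (sqrt_nonneg _)

theorem halfAngleTan_zero (a : ℝ) : halfAngleTan a 0 = 0 := by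
  simp [halfAngleTan]

theorem halfAngleTan_self (ha : 0 < a) : halfAngleTan a a = 1 := by
  simp [halfAngleTan, ha.ne']

theorem continuous_halfAngleTan (ha : 0 < a) : Continuous (halfAngleTan a) :=
  continuous_id.div (by fun_prop) fun x => (add_sqrt_sq_sub_sq_pos ha x).ne'

theorem halfAngleTan_pos (hx0 : 0 < x) (hxa : x < a) : 0 < halfAngleTan a x :=
  div_pos hx0 (add_sqrt_sq_sub_sq_pos (hx0.trans hxa) x)

theorem halfAngleTan_lt_one (hx0 : 0 < x) (hxa : x < a) : halfAngleTan a x < 1 := by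
  rw [halfAngleTan, div_lt_one (add_sqrt_sq_sub_sq_pos (hx0.trans hxa) x)]
  linarith [sqrt_nonneg (a ^ 2 - x ^ 2)]

theorem sqrt_sq_sub_sq_eq_halfAngleTan (hx0 : 0 < x) (hxa : x < a) :
    √(a ^ 2 - x ^ 2) = a * (1 - halfAngleTan a x ^ 2) / (1 + halfAngleTan a x ^ 2) := by
  have hs : √(a ^ 2 - x ^ 2) ^ 2 = a ^ 2 - x ^ 2 := sq_sqrt (by nlinarith)
  have hden := add_sqrt_sq_sub_sq_pos (hx0.trans hxa) x
  rw [halfAngleTan, eq_div_iff (by positivity)]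
  field_simp
  linear_combination (a + √(a ^ 2 - x ^ 2)) * hs

theorem self_eq_halfAngleTan (hx0 : 0 < x) (hxa : x < a) :
    x = 2 * a * halfAngleTan a x / (1 + halfAngleTan a x ^ 2) := by
  have hden := add_sqrt_sq_sub_sq_pos (hx0.trans hxa) x
  have ht : halfAngleTan a x * (a + √(a ^ 2 - x ^ 2)) = x := div_mul_cancel₀ _ hden.ne'
  rw [sqrt_sq_sub_sq_eq_halfAngleTan hx0 hxa] at ht
  nth_rw 1 [← ht]
  field_simp
  ring

theorem hasDerivAt_halfAngleTan (hx0 : 0 < x) (hxa : x < a) :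
    HasDerivAt (halfAngleTan a)
      ((1 + halfAngleTan a x ^ 2) ^ 2 / (2 * a * (1 - halfAngleTan a x ^ 2))) x := by
  have ha : 0 < a := hx0.trans hxa
  have hs := ((hasDerivAt_pow 2 x).const_sub (a ^ 2)).sqrt (by nlinarith : a ^ 2 - x ^ 2 ≠ 0)
  refine ((hasDerivAt_id x).div (hs.const_add a) (add_sqrt_sq_sub_sq_pos ha x).ne').congr_deriv ?_
  have ht1 := halfAngleTan_lt_one hx0 hxa
  have hx := self_eq_halfAngleTan hx0 hxa
  rw [sqrt_sq_sub_sq_eq_halfAngleTan hx0 hxa]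
  set t := halfAngleTan a x
  have : 1 - t ^ 2 ≠ 0 := by nlinarith [halfAngleTan_pos hx0 hxa]
  have : 1 + t ^ 2 ≠ 0 := by positivity
  have := ha.ne'
  simp only [id, Nat.cast_ofNat, Nat.add_one_sub_one, pow_one]
  rw [hx]
  field_simp
  ring

theorem sqrt_div_sq_sub_one (hx0 : 0 < x) (hxa : x < a) :
    √((a / x) ^ 2 - 1) = √(a ^ 2 - x ^ 2) / x := by
  rw [show (a / x) ^ 2 - 1 = (a ^ 2 - x ^ 2) / x ^ 2 by field_simp,
    sqrt_div (by nlinarith), sqrt_sq hx0.le]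

theorem div_sub_sqrt_eq_halfAngleTan (hx0 : 0 < x) (hxa : x < a) :
    a / x - √((a / x) ^ 2 - 1) = halfAngleTan a x := by
  have hs : √(a ^ 2 - x ^ 2) ^ 2 = a ^ 2 - x ^ 2 := sq_sqrt (by nlinarith)
  rw [sqrt_div_sq_sub_one hx0 hxa, halfAngleTan, div_sub_div_same,
    div_eq_div_iff hx0.ne' (add_sqrt_sq_sub_sq_pos (hx0.trans hxa) x).ne']
  linear_combination -hs

theorem div_add_sqrt_eq_inv_halfAngleTan (hx0 : 0 < x) (hxa : x < a) :
    a / x + √((a / x) ^ 2 - 1) = (halfAngleTan a x)⁻¹ := by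
  rw [sqrt_div_sq_sub_one hx0 hxa, halfAngleTan, inv_div, add_div]

end HalfAngleTan

noncomputable def densityKernel (b : ℝ) : ℝ :=
  (b + √(b ^ 2 - 1)) ^ (2 / 3 : ℝ) - (b - √(b ^ 2 - 1)) ^ (2 / 3 : ℝ)

theorem densityKernel_nonneg {b : ℝ} (hb : 0 ≤ b) : 0 ≤ densityKernel b := by
  have hsqrt : √(b ^ 2 - 1) ≤ b :=
    calc √(b ^ 2 - 1) ≤ √(b ^ 2) := sqrt_le_sqrt (by linarith)
      _ = b := sqrt_sq hb
  exact sub_nonneg.2 <| rpow_le_rpow (sub_nonneg.2 hsqrt)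
    (by linarith [sqrt_nonneg (b ^ 2 - 1)]) (by norm_num)

theorem densityKernel_div_eq {a x : ℝ} (hx0 : 0 < x) (hxa : x < a) :
    densityKernel (a / x) = (halfAngleTan a x ^ (2 / 3 : ℝ))⁻¹ - halfAngleTan a x ^ (2 / 3 : ℝ) := by
  rw [densityKernel, div_add_sqrt_eq_inv_halfAngleTan hx0 hxa,
    div_sub_sqrt_eq_halfAngleTan hx0 hxa, inv_rpow (halfAngleTan_pos hx0 hxa).le]

theorem hasDerivAt_primitive_comp {a x : ℝ} (hx0 : 0 < x) (hxa : x < a) :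
    HasDerivAt (fun x => 24 * a ^ 3 * primitive (halfAngleTan a x ^ (1 / 3 : ℝ)))
      (x ^ 2 * densityKernel (a / x)) x := by
  have ht0 := halfAngleTan_pos hx0 hxa
  have ht1 := halfAngleTan_lt_one hx0 hxa
  refine (((hasDerivAt_primitive _).comp x
    ((hasDerivAt_halfAngleTan hx0 hxa).rpow_const (Or.inl ht0.ne'))).const_mul _).congr_deriv ?_
  rw [densityKernel_div_eq hx0 hxa]
  have hx := self_eq_halfAngleTan hx0 hxa
  set t := halfAngleTan a x
  set w := t ^ (1 / 3 : ℝ) with hw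
  have hw3 : t = w ^ 3 := by
    rw [hw, ← rpow_natCast, ← rpow_mul ht0.le]; norm_num
  have hw2 : t ^ (2 / 3 : ℝ) = w ^ 2 := by
    rw [hw, ← rpow_natCast, ← rpow_mul ht0.le]; norm_num
  have hwm2 : t ^ (1 / 3 - 1 : ℝ) = (w ^ 2)⁻¹ := by
    rw [← hw2, ← rpow_neg ht0.le]; norm_num
  rw [hx, hw2, hwm2, hw3]
  have : 0 < w := by positivity
  have : 1 - w ^ 6 ≠ 0 := by nlinarith
  have := (hx0.trans hxa).ne'
  field_simp
  ring

theorem integral_sq_mul_densityKernel {a : ℝ} (ha : 0 < a) :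
    ∫ x in 0..a, x ^ 2 * densityKernel (a / x) = 10 * π * a ^ 3 / 81 := by
  set F := fun x => 24 * a ^ 3 * primitive (halfAngleTan a x ^ (1 / 3 : ℝ))
  have hderiv : ∀ x ∈ Set.Ioo 0 a, HasDerivAt F (x ^ 2 * densityKernel (a / x)) x :=
    fun x hx => hasDerivAt_primitive_comp hx.1 hx.2
  have hcont : ContinuousOn F (Set.Icc 0 a) :=
    (continuous_const.mul (continuous_primitive.comp
      ((continuous_halfAngleTan ha).rpow_const fun _ => Or.inr (by norm_num)))).continuousOn
  have hint := intervalIntegral.integrableOn_deriv_of_nonneg hcont hderiv fun x hx =>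
    mul_nonneg (sq_nonneg x) (densityKernel_nonneg (div_nonneg ha.le hx.1.le))
  rw [intervalIntegral.integral_eq_sub_of_hasDerivAt_of_le ha.le hcont hderiv
    ((intervalIntegrable_iff_integrableOn_Ioc_of_le ha.le).2 hint)]
  simp only [F, halfAngleTan_self ha, halfAngleTan_zero, one_rpow,
    zero_rpow (by norm_num : (1 / 3 : ℝ) ≠ 0), primitive_one, primitive_zero]
  ring

end Bures

/-- The second moment of the Bures asymptotic density on `(0, 3√3)` equals `5/2`. -/
theorem bures_second_moment :
    ∫ x in Set.Ioo (0:ℝ) (3 * Real.sqrt 3),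
      x ^ 2 * ((1 / (4 * π * Real.sqrt 3)) *
        (((3 * Real.sqrt 3) / x
            + Real.sqrt (((3 * Real.sqrt 3) / x) ^ 2 - 1)) ^ ((2:ℝ)/3)
          - ((3 * Real.sqrt 3) / x
            - Real.sqrt (((3 * Real.sqrt 3) / x) ^ 2 - 1)) ^ ((2:ℝ)/3))) = 5 / 2 := by
  have ha : (0 : ℝ) < 3 * √3 := by positivity
  change ∫ x in Set.Ioo 0 (3 * √3),
    x ^ 2 * (1 / (4 * π * √3) * Bures.densityKernel (3 * √3 / x)) = 5 / 2
  simp_rw [mul_left_comm (_ ^ 2)]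
  rw [← integral_Ioc_eq_integral_Ioo, ← intervalIntegral.integral_of_le ha.le,
    intervalIntegral.integral_const_mul, Bures.integral_sq_mul_densityKernel ha]
  field_simp
  linear_combination 540 * sq_sqrt (show (0 : ℝ) ≤ 3 by norm_num)
end

section
/- The Bures asymptotic density P_B(x) = (1/(4π√3))·[ (a/x + √((a/x)² − 1))^{2/3} − (a/x − √((a/x)² − 1))^{2/3} ], with a = 3√3, integrates to 1 over (0, 3√3). -/
/-!
Put `w = t ^ 3` and substitute `x = 2 a t³ / (1 + t⁶)`, an increasing bijection from `(0, 1)`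
onto `(0, a)`. Then `a / x = (w + w⁻¹) / 2`, so `√((a/x)² - 1) = (w⁻¹ - w) / 2` and the two
radicals of the density collapse to `t⁻²` and `t²`. After multiplying by the Jacobian the
integrand becomes the rational function `6 a (1 - t⁴)(1 - t⁶) / (1 + t⁶)²`, which has an
elementary primitive worth `4π/3` at `t = 1` and `0` at `t = 0`; hence the integral of the
bracket over `(0, a)` is `4π a / 3`, which is `4π√3` for `a = 3√3`.
-/

open Real MeasureTheory Set

noncomputable def buresKernel (u : ℝ) : ℝ :=
  (u + √(u ^ 2 - 1)) ^ ((2:ℝ)/3) - (u - √(u ^ 2 - 1)) ^ ((2:ℝ)/3)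

lemma sqrt_sq_add_inv_div_two_sub_one {w : ℝ} (hw₀ : 0 < w) (hw₁ : w ≤ 1) :
    √(((w + w⁻¹) / 2) ^ 2 - 1) = (w⁻¹ - w) / 2 := by
  have hsq : ((w + w⁻¹) / 2) ^ 2 - 1 = ((w⁻¹ - w) / 2) ^ 2 := by
    field_simp; ring
  have : w ≤ w⁻¹ := le_trans hw₁ (one_le_inv₀ hw₀ |>.2 hw₁)
  rw [hsq, sqrt_sq (by linarith)]

lemma buresKernel_add_inv_div_two {w : ℝ} (hw₀ : 0 < w) (hw₁ : w ≤ 1) :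
    buresKernel ((w + w⁻¹) / 2) = w⁻¹ ^ ((2:ℝ)/3) - w ^ ((2:ℝ)/3) := by
  rw [buresKernel, sqrt_sq_add_inv_div_two_sub_one hw₀ hw₁]
  congr 2 <;> ring

noncomputable def buresPrimitive (t : ℝ) : ℝ :=
  4 * arctan t + 4 / 3 * arctan (t ^ 3) + 2 * (t - t ^ 5) / (1 + t ^ 6)

lemma hasDerivAt_buresPrimitive (t : ℝ) :
    HasDerivAt buresPrimitive (6 * (1 - t ^ 4) * (1 - t ^ 6) / (1 + t ^ 6) ^ 2) t := by
  have h6 : 1 + t ^ 6 ≠ 0 := by positivity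
  have hid := hasDerivAt_id' t
  have h : HasDerivAt buresPrimitive _ t :=
    ((hid.arctan.const_mul 4).add ((hid.pow 3).arctan.const_mul (4 / 3))).add
      (((hid.sub (hid.pow 5)).const_mul 2).div ((hid.pow 6).const_add 1) h6)
  refine h.congr_deriv ?_
  simp only [Pi.pow_apply, Pi.sub_apply]
  field_simp
  ring

lemma integral_deriv_buresPrimitive :
    ∫ t in (0:ℝ)..1, 6 * (1 - t ^ 4) * (1 - t ^ 6) / (1 + t ^ 6) ^ 2 = 4 * π / 3 := by
  have hcont : Continuous fun t : ℝ => 6 * (1 - t ^ 4) * (1 - t ^ 6) / (1 + t ^ 6) ^ 2 :=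
    Continuous.div (by fun_prop) (by fun_prop) fun t => by positivity
  rw [intervalIntegral.integral_eq_sub_of_hasDerivAt (fun t _ => hasDerivAt_buresPrimitive t)
    (hcont.intervalIntegrable 0 1)]
  norm_num [buresPrimitive, arctan_one]
  ring

noncomputable def buresSubst (a t : ℝ) : ℝ := 2 * a * t ^ 3 / (1 + t ^ 6)

lemma hasDerivAt_buresSubst (a t : ℝ) :
    HasDerivAt (buresSubst a) (6 * a * t ^ 2 * (1 - t ^ 6) / (1 + t ^ 6) ^ 2) t := by
  have h6 : 1 + t ^ 6 ≠ 0 := by positivity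
  have hid := hasDerivAt_id' t
  have h : HasDerivAt (buresSubst a) _ t :=
    ((hid.pow 3).const_mul (2 * a)).div ((hid.pow 6).const_add 1) h6
  refine h.congr_deriv ?_
  simp only [Pi.pow_apply]
  field_simp
  ring

lemma strictMonoOn_buresSubst {a : ℝ} (ha : 0 < a) : StrictMonoOn (buresSubst a) (Icc 0 1) := by
  refine strictMonoOn_of_deriv_pos (convex_Icc 0 1)
    (fun t _ => (hasDerivAt_buresSubst a t).continuousAt.continuousWithinAt) fun t ht => ?_
  rw [interior_Icc] at ht
  obtain ⟨ht₀, ht₁⟩ := ht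
  have : 0 < 1 - t ^ 6 := sub_pos.2 (pow_lt_one₀ ht₀.le ht₁ (by norm_num))
  rw [(hasDerivAt_buresSubst a t).deriv]
  positivity

lemma image_buresSubst_Ioo {a : ℝ} (ha : 0 < a) : buresSubst a '' Ioo 0 1 = Ioo 0 a := by
  have h0 : buresSubst a 0 = 0 := by simp [buresSubst]
  have h1 : buresSubst a 1 = a := by norm_num [buresSubst]
  refine Subset.antisymm ?_ ?_
  · rintro _ ⟨t, ht, rfl⟩
    have hmono := strictMonoOn_buresSubst ha
    exact ⟨h0.symm.trans_lt (hmono (left_mem_Icc.2 zero_le_one) (Ioo_subset_Icc_self ht) ht.1),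
      (hmono (Ioo_subset_Icc_self ht) (right_mem_Icc.2 zero_le_one) ht.2).trans_eq h1⟩
  · have := intermediate_value_Ioo zero_le_one
      fun t _ => (hasDerivAt_buresSubst a t).continuousAt.continuousWithinAt
    rwa [h0, h1] at this

lemma div_buresSubst {a t : ℝ} (ha : a ≠ 0) (ht : t ≠ 0) :
    a / buresSubst a t = (t ^ 3 + (t ^ 3)⁻¹) / 2 := by
  unfold buresSubst
  field_simp
  ring

lemma buresKernel_div_buresSubst {a t : ℝ} (ha : a ≠ 0) (ht₀ : 0 < t) (ht₁ : t ≤ 1) :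
    buresKernel (a / buresSubst a t) = (t ^ 2)⁻¹ - t ^ 2 := by
  have hcube : (t ^ 3) ^ ((2:ℝ)/3) = t ^ 2 := by
    rw [← rpow_natCast, ← rpow_mul ht₀.le]; norm_num
  rw [div_buresSubst ha ht₀.ne',
    buresKernel_add_inv_div_two (by positivity) (pow_le_one₀ ht₀.le ht₁),
    inv_rpow (by positivity), hcube]

theorem integral_buresKernel {a : ℝ} (ha : 0 < a) :
    ∫ x in Ioo 0 a, buresKernel (a / x) = 4 * π / 3 * a := by
  rw [← image_buresSubst_Ioo ha, integral_image_eq_integral_abs_deriv_smul measurableSet_Ioo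
    (fun t _ => (hasDerivAt_buresSubst a t).hasDerivWithinAt)
    ((strictMonoOn_buresSubst ha).injOn.mono Ioo_subset_Icc_self)]
  have hintegrand : EqOn (fun t => |6 * a * t ^ 2 * (1 - t ^ 6) / (1 + t ^ 6) ^ 2| •
      buresKernel (a / buresSubst a t))
      (fun t => a * (6 * (1 - t ^ 4) * (1 - t ^ 6) / (1 + t ^ 6) ^ 2)) (Ioo 0 1) := by
    intro t ⟨ht₀, ht₁⟩
    have : 0 < 1 - t ^ 6 := sub_pos.2 (pow_lt_one₀ ht₀.le ht₁ (by norm_num))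
    dsimp only
    rw [smul_eq_mul, buresKernel_div_buresSubst ha.ne' ht₀ ht₁.le, abs_of_pos (by positivity)]
    field_simp
  rw [setIntegral_congr_fun measurableSet_Ioo hintegrand, integral_const_mul,
    ← integral_Ioc_eq_integral_Ioo, ← intervalIntegral.integral_of_le zero_le_one,
    integral_deriv_buresPrimitive]
  ring

/-- The Bures asymptotic density integrates to 1 over `(0, 3√3)`. -/
theorem bures_density_integrates_to_one :
    ∫ x in Set.Ioo (0:ℝ) (3 * Real.sqrt 3),
      (1 / (4 * π * Real.sqrt 3)) *
        (((3 * Real.sqrt 3) / x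
            + Real.sqrt (((3 * Real.sqrt 3) / x) ^ 2 - 1)) ^ ((2:ℝ)/3)
          - ((3 * Real.sqrt 3) / x
            - Real.sqrt (((3 * Real.sqrt 3) / x) ^ 2 - 1)) ^ ((2:ℝ)/3)) = 1 := by
  change ∫ x in Ioo 0 (3 * √3), 1 / (4 * π * √3) * buresKernel (3 * √3 / x) = 1
  rw [integral_const_mul, integral_buresKernel (by positivity)]
  field_simp
end
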